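/- arXiv:quant-ph/9908050 — 5 statements merged into one kernel-verified Lean document; each statement's English description precedes it below -/
import Mathlib

section
/- For every k ≥ 1, every number of particles p ≥ 1 and particle dimensions n₁,…,n_p ≥ 1, the set Σ^k(n₁,…,n_p) of separable states with ensemble length at most k is a compact and connected subset of the space of I×I complex matrices, where I = Π_{i : Fin p} Fin nᵢ. -/
open scoped ComplexOrder
/-- A density matrix: positive semidefinite (hence Hermitian) with trace 1. -/
def IsDensityMatrix {m : Type*} [Fintype m] [DecidableEq m] (A : Matrix m m ℂ) : Prop :=
  A.PosSemidef ∧ A.trace = 1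

/-- Tensor (Kronecker) product of the matrices `B i` over all particles. -/
def prodMat {p : ℕ} (n : Fin p → ℕ) (B : ∀ i, Matrix (Fin (n i)) (Fin (n i)) ℂ) :
    Matrix (∀ i, Fin (n i)) (∀ i, Fin (n i)) ℂ :=
  fun x y => ∏ i, B i (x i) (y i)

/-- `Σ^k(n₁,…,n_p)`: separable states of ensemble length at most `k`. -/
def SigmaK {p : ℕ} (n : Fin p → ℕ) (k : ℕ) :
    Set (Matrix (∀ i, Fin (n i)) (∀ i, Fin (n i)) ℂ) :=
  {A | ∃ (l : Fin k → ℝ) (B : Fin k → ∀ i, Matrix (Fin (n i)) (Fin (n i)) ℂ),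
    (∀ j, 0 ≤ l j) ∧ (∑ j, l j) = 1 ∧ (∀ j i, IsDensityMatrix (B j i)) ∧
    A = ∑ j, l j • prodMat n (B j)}


open Matrix

set_option linter.unusedSectionVars false

section Helpers

variable {m : Type*} [Fintype m] [DecidableEq m]

lemma psd_real_smul {A : Matrix m m ℂ} (hA : A.PosSemidef) {c : ℝ} (hc : 0 ≤ c) :
    (c • A).PosSemidef := by
  refine PosSemidef.of_dotProduct_mulVec_nonneg ?_ ?_
  · show (c • A)ᴴ = c • A
    rw [conjTranspose_smul, star_trivial, hA.1]
  · intro x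
    rw [smul_mulVec, dotProduct_smul, Complex.real_smul]
    exact mul_nonneg (by exact_mod_cast hc) (hA.dotProduct_mulVec_nonneg x)

lemma dm_diag_nonneg {A : Matrix m m ℂ} (hA : A.PosSemidef) (i : m) : 0 ≤ A i i := by
  have := hA.dotProduct_mulVec_nonneg (Pi.single i 1)
  simpa [Matrix.mulVec_single, dotProduct, Pi.single_apply, apply_ite] using this

lemma psd_det_nonneg {A : Matrix m m ℂ} (hA : A.PosSemidef) : 0 ≤ A.det := by
  rw [hA.1.det_eq_prod_eigenvalues]
  exact Finset.prod_nonneg fun i _ => by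
    rw [RCLike.ofReal_nonneg]; exact hA.eigenvalues_nonneg i

lemma dm_entry_norm_le {A : Matrix m m ℂ} (hA : IsDensityMatrix A) (i j : m) :
    ‖A i j‖ ≤ 1 := by
  have hdiag : ∀ t, 0 ≤ A t t := dm_diag_nonneg hA.1
  have hdle : ∀ t : m, A t t ≤ 1 := by
    intro t
    calc A t t ≤ ∑ s, A s s := Finset.single_le_sum (fun s _ => hdiag s) (Finset.mem_univ t)
    _ = 1 := hA.2
  -- real diagonal entries
  have hre : ∀ t, A t t = ((A t t).re : ℂ) := by
    intro t
    have h := (Complex.le_def.mp (hdiag t)).2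
    simp at h
    exact (Complex.re_add_im (A t t)) ▸ by rw [← h]; simp [Complex.ext_iff]
  have hre01 : ∀ t, 0 ≤ (A t t).re ∧ (A t t).re ≤ 1 := by
    intro t
    constructor
    · exact (Complex.le_def.mp (hdiag t)).1
    · exact (Complex.le_def.mp (hdle t)).1
  -- 2x2 submatrix determinant
  have hsub : (A.submatrix ![i,j] ![i,j]).PosSemidef := hA.1.submatrix _
  have hdet := psd_det_nonneg hsub
  rw [Matrix.det_fin_two] at hdet
  simp only [Matrix.submatrix_apply, Matrix.cons_val_zero, Matrix.cons_val_one,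
    Matrix.head_cons] at hdet
  have hji : A j i = star (A i j) := by
    conv_lhs => rw [← hA.1.1]
    rfl
  rw [hji] at hdet
  have hms : A i j * star (A i j) = ((Complex.normSq (A i j) : ℝ) : ℂ) :=
    Complex.mul_conj _
  rw [hms, hre i, hre j] at hdet
  have h1 : Complex.normSq (A i j) ≤ (A i i).re * (A j j).re := by
    have := sub_nonneg.mp hdet
    rw [← Complex.ofReal_mul] at this
    exact_mod_cast this
  have h2 : Complex.normSq (A i j) ≤ 1 := by
    refine h1.trans (mul_le_one₀ (hre01 i).2 (hre01 j).1 (hre01 j).2)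
  have h3 : ‖A i j‖^2 = Complex.normSq (A i j) := by
    rw [Complex.sq_norm]
  nlinarith [norm_nonneg (A i j)]


lemma isClosed_nonneg_complex : IsClosed {z : ℂ | 0 ≤ z} := by
  have : {z : ℂ | 0 ≤ z} = Complex.re ⁻¹' Set.Ici 0 ∩ Complex.im ⁻¹' {0} := by
    ext z
    simp [Complex.le_def, eq_comm]
  rw [this]
  exact (isClosed_Ici.preimage Complex.continuous_re).inter
    (isClosed_singleton.preimage Complex.continuous_im)

lemma dm_isClosed : IsClosed {A : Matrix m m ℂ | IsDensityMatrix A} := by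
  have h1 : IsClosed {A : Matrix m m ℂ | A.IsHermitian} := by
    have hc : Continuous fun A : Matrix m m ℂ => Aᴴ :=
      continuous_pi fun i => continuous_pi fun j =>
        continuous_star.comp ((continuous_apply i).comp (continuous_apply j))
    exact isClosed_eq hc continuous_id
  have h2 : IsClosed {A : Matrix m m ℂ | ∀ x : m → ℂ, 0 ≤ star x ⬝ᵥ A *ᵥ x} := by
    rw [Set.setOf_forall]
    refine isClosed_iInter fun x => ?_
    have hc : Continuous fun A : Matrix m m ℂ => star x ⬝ᵥ A *ᵥ x := by
      show Continuous fun A : Matrix m m ℂ => ∑ i, star (x i) * ∑ j, A i j * x j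
      refine continuous_finset_sum _ fun i _ => continuous_const.mul ?_
      exact continuous_finset_sum _ fun j _ =>
        (((continuous_apply j).comp (continuous_apply i)).fun_mul continuous_const)
    exact isClosed_nonneg_complex.preimage hc
  have h3 : IsClosed {A : Matrix m m ℂ | A.trace = 1} := by
    have hc : Continuous fun A : Matrix m m ℂ => A.trace := by
      show Continuous fun A : Matrix m m ℂ => ∑ i, A i i
      exact continuous_finset_sum _ fun i _ => (continuous_apply i).comp (continuous_apply i)
    exact isClosed_eq hc continuous_const
  have hset : {A : Matrix m m ℂ | IsDensityMatrix A} =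
      ({A : Matrix m m ℂ | A.IsHermitian} ∩ {A | ∀ x : m → ℂ, 0 ≤ star x ⬝ᵥ A *ᵥ x}) ∩
        {A | A.trace = 1} := by
    ext A
    simp [IsDensityMatrix, Matrix.posSemidef_iff_dotProduct_mulVec, and_assoc]
  rw [hset]
  exact (h1.inter h2).inter h3

lemma dm_isCompact : IsCompact {A : Matrix m m ℂ | IsDensityMatrix A} := by
  have hK : IsCompact {A : Matrix m m ℂ | ∀ i j, ‖A i j‖ ≤ 1} := by
    have hset : {A : Matrix m m ℂ | ∀ i j, ‖A i j‖ ≤ 1} =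
        Set.univ.pi fun _ : m => Set.univ.pi fun _ : m => Metric.closedBall (0 : ℂ) 1 := by
      ext A
      simp only [Set.mem_pi, Set.mem_univ, forall_true_left, Metric.mem_closedBall,
        dist_zero_right, Set.mem_setOf_eq]
      constructor
      · intro h i _ j _
        simpa [Metric.mem_closedBall, dist_zero_right] using h i j
      · intro h i j
        simpa [Metric.mem_closedBall, dist_zero_right] using
          h i (Set.mem_univ i) j (Set.mem_univ j)
    rw [hset]
    exact isCompact_univ_pi fun _ => isCompact_univ_pi fun _ => isCompact_closedBall 0 1
  exact hK.of_isClosed_subset dm_isClosed fun A hA i j => dm_entry_norm_le hA i j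

lemma dm_convex : Convex ℝ {A : Matrix m m ℂ | IsDensityMatrix A} := by
  intro A hA B hB a b ha hb hab
  refine ⟨(psd_real_smul hA.1 ha).add (psd_real_smul hB.1 hb), ?_⟩
  rw [Matrix.trace_add, Matrix.trace_smul, Matrix.trace_smul, hA.2, hB.2]
  push_cast [Complex.real_smul]
  norm_cast
  simpa using hab

lemma dm_nonempty [Nonempty m] : {A : Matrix m m ℂ | IsDensityMatrix A}.Nonempty := by
  refine ⟨((Fintype.card m : ℝ)⁻¹) • 1, psd_real_smul Matrix.PosSemidef.one (by positivity), ?_⟩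
  rw [Matrix.trace_smul, Matrix.trace_one]
  have h : (Fintype.card m : ℂ) ≠ 0 := Nat.cast_ne_zero.mpr Fintype.card_ne_zero
  rw [Complex.real_smul]
  push_cast
  field_simp

end Helpers

/-- for `k ≥ 1`, `p ≥ 1`, all `nᵢ ≥ 1`, the set `Σ^k(n₁,…,n_p)` is a
compact and connected subset of the space of `I × I` complex matrices. -/
theorem sigmaK_isCompact_isConnected {p : ℕ} (hp : 1 ≤ p) (n : Fin p → ℕ)
    (hn : ∀ i, 1 ≤ n i) (k : ℕ) (hk : 1 ≤ k) :
    IsCompact (SigmaK n k) ∧ IsConnected (SigmaK n k) := by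
  classical
  haveI : ∀ i : Fin p, Nonempty (Fin (n i)) := fun i => ⟨⟨0, hn i⟩⟩
  let S : Set ((Fin k → ℝ) × (Fin k → ∀ i, Matrix (Fin (n i)) (Fin (n i)) ℂ)) :=
    (stdSimplex ℝ (Fin k)) ×ˢ
      (Set.univ.pi fun _ : Fin k => Set.univ.pi fun i : Fin p =>
        {A : Matrix (Fin (n i)) (Fin (n i)) ℂ | IsDensityMatrix A})
  let F : ((Fin k → ℝ) × (Fin k → ∀ i, Matrix (Fin (n i)) (Fin (n i)) ℂ)) →
      Matrix (∀ i, Fin (n i)) (∀ i, Fin (n i)) ℂ :=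
    fun q => ∑ j, q.1 j • prodMat n (q.2 j)
  have hprod : Continuous fun B : (∀ i, Matrix (Fin (n i)) (Fin (n i)) ℂ) => prodMat n B :=
    continuous_pi fun x => continuous_pi fun y =>
      continuous_finset_prod _ fun i _ =>
        (continuous_apply (y i)).comp ((continuous_apply (x i)).comp (continuous_apply i))
  have hF : Continuous F := by
    refine continuous_finset_sum _ fun j _ => Continuous.fun_smul ?_ ?_
    · exact (continuous_apply j).comp continuous_fst
    · exact hprod.comp ((continuous_apply j).comp continuous_snd)
  have himg : SigmaK n k = F '' S := by
    ext A
    constructor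
    · rintro ⟨l, B, h0, h1, hD, rfl⟩
      refine ⟨(l, B), ⟨⟨h0, h1⟩, ?_⟩, rfl⟩
      intro j _
      intro i _
      exact hD j i
    · rintro ⟨⟨l, B⟩, ⟨⟨h0, h1⟩, hB⟩, rfl⟩
      exact ⟨l, B, h0, h1,
        fun j i => hB j (Set.mem_univ j) i (Set.mem_univ i), rfl⟩
  have hScompact : IsCompact S :=
    (isCompact_stdSimplex ℝ _).prod
      (isCompact_univ_pi fun _ => isCompact_univ_pi fun i => dm_isCompact)
  have hSconv : Convex ℝ S :=
    (convex_stdSimplex ℝ _).prod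
      (convex_pi fun _ _ => convex_pi fun i _ => dm_convex)
  have hSne : S.Nonempty := by
    refine ⟨(fun _ => (k : ℝ)⁻¹, fun _ i =>
      (dm_nonempty (m := Fin (n i))).choose), ⟨⟨fun _ => by positivity, ?_⟩, ?_⟩⟩
    · rw [Finset.sum_const]
      simp
      field_simp
    · intro j _ i _
      exact (dm_nonempty (m := Fin (n i))).choose_spec
  have hSconn : IsConnected S := ⟨hSne, hSconv.isPreconnected⟩
  constructor
  · rw [himg]; exact hScompact.image hF
  · rw [himg]; exact hSconn.image F hF.continuousOn
end

section
/- Let n₁ ≤ n₂ ≤ ⋯ ≤ n_p with n₁⋯n_{p−1} ≤ n_p, and let N = n₁⋯n_p. If k < n₁²⋯n_{p−1}², then the set Σ^k(n₁,…,n_p) has (N²−1)-dimensional Hausdorff measure zero in the space of I×I complex matrices; in particular it has measure zero in the set of separable states. -/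
open scoped ComplexOrder
open MeasureTheory

/-- A pure density matrix: a density matrix of rank one. -/
def IsPureDensityMatrix {m : Type*} [Fintype m] [DecidableEq m] (A : Matrix m m ℂ) : Prop :=
  IsDensityMatrix A ∧ A.rank = 1

/-- `Σ_pure^k(n₁,…,n_p)`: separable states of pure-state ensemble length at most `k`. -/
def SigmaPureK {p : ℕ} (n : Fin p → ℕ) (k : ℕ) :
    Set (Matrix (∀ i, Fin (n i)) (∀ i, Fin (n i)) ℂ) :=
  {A | ∃ (l : Fin k → ℝ) (B : Fin k → ∀ i, Matrix (Fin (n i)) (Fin (n i)) ℂ),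
    (∀ j, 0 ≤ l j) ∧ (∑ j, l j) = 1 ∧ (∀ j i, IsPureDensityMatrix (B j i)) ∧
    A = ∑ j, l j • prodMat n (B j)}

noncomputable instance {m : Type*} [Fintype m] : NormedAddCommGroup (Matrix m m ℂ) :=
  Matrix.normedAddCommGroup

noncomputable instance {m : Type*} [Fintype m] : MeasurableSpace (Matrix m m ℂ) := borel _

instance {m : Type*} [Fintype m] : BorelSpace (Matrix m m ℂ) := ⟨rfl⟩

instance {m : Type*} [Fintype m] :
    @BorelSpace (Matrix m m ℂ) PseudoMetricSpace.toUniformSpace.toTopologicalSpace _ := ⟨rfl⟩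

open MeasureTheory Set Module
open scoped NNReal ENNReal


section DimHAux

variable {E F : Type*} [NormedAddCommGroup E] [NormedSpace ℝ E]
  [NormedAddCommGroup F] [NormedSpace ℝ F] [SecondCountableTopology E]

theorem dimH_image_le_of_contDiffOn_isOpen {f : E → F} {U : Set E}
    (hf : ∀ x ∈ U, ContDiffAt ℝ 1 f x) : dimH (f '' U) ≤ dimH U := by
  refine dimH_image_le_of_locally_lipschitzOn fun x hx => ?_
  obtain ⟨K, t, ht, hl⟩ := (hf x hx).exists_lipschitzOnWith
  exact ⟨K, t, mem_nhdsWithin_of_mem_nhds ht, hl⟩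

end DimHAux

section Chart

variable {α β : Type*} [Fintype α] [Fintype β] [DecidableEq α] [DecidableEq β] {k : ℕ}

/-- The "completed" coefficient matrix in a chart of rank-`≤ k` matrices. -/
def Wfun (s : Fin k → β) (Z : {v : β // v ∉ Finset.image s Finset.univ} → Fin k → ℝ)
    (j : Fin k) (v : β) : ℝ :=
  if h : v ∈ Finset.image s Finset.univ then (if v = s j then 1 else 0) else Z ⟨v, h⟩ j

/-- Chart for matrices of rank at most `k` (as functions `α → β → ℝ`). -/
def chartFun (s : Fin k → β)
    (q : ((α × Fin k) → ℝ) × ({v : β // v ∉ Finset.image s Finset.univ} → Fin k → ℝ)) :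
    α → β → ℝ :=
  fun x v => ∑ j, q.1 (x, j) * Wfun s q.2 j v

theorem chart_cover [Nonempty β] (hkb : k ≤ Fintype.card β) (G : α → β → ℝ)
    (hG : (Matrix.of G).rank ≤ k) :
    ∃ (s : Fin k → β), Function.Injective s ∧ ∃ q, G = chartFun s q := by
  classical
  set cols : β → (α → ℝ) := fun v x => G x v with hcols
  have hrank : finrank ℝ (Submodule.span ℝ (Set.range cols)) ≤ k := by
    rw [Matrix.rank_eq_finrank_span_cols] at hG
    exact hG
  obtain ⟨b, hb_sub, hb_span, hb_li⟩ := exists_linearIndependent ℝ (Set.range cols)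
  have hbfin : b.Finite := hb_li.setFinite
  have : Fintype b := hbfin.fintype
  have hcard : b.toFinset.card ≤ k := by
    rw [← finrank_span_set_eq_card hb_li, hb_span]; exact hrank
  have hch : ∀ w ∈ b, ∃ v : β, cols v = w := fun w hw => hb_sub hw
  set ch : (α → ℝ) → β := fun w => if h : ∃ v : β, cols v = w then h.choose else Classical.arbitrary β
    with hch_def
  have hch_spec : ∀ w ∈ b, cols (ch w) = w := by
    intro w hw
    have h := hch w hw
    simp only [hch_def, dif_pos h]
    exact h.choose_spec
  set t₀ : Finset β := b.toFinset.image ch with ht₀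
  have ht₀card : t₀.card ≤ k := le_trans (Finset.card_image_le) hcard
  obtain ⟨t, ht0t, htcard⟩ := Finset.exists_superset_card_eq ht₀card hkb
  set eqv : t ≃ Fin k := Fintype.equivFinOfCardEq ((Fintype.card_coe t).trans htcard) with heqv
  set s : Fin k → β := fun j => (eqv.symm j : β) with hs
  have hsinj : Function.Injective s := fun i j hij =>
    eqv.symm.injective (Subtype.ext hij)
  have hsrange : Finset.image s Finset.univ = t := by
    apply Finset.ext
    intro v
    simp only [Finset.mem_image, Finset.mem_univ, true_and]
    constructor
    · rintro ⟨j, rfl⟩; exact (eqv.symm j).2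
    · intro hv
      exact ⟨eqv ⟨v, hv⟩, by simp [hs]⟩
  have hspan : ∀ v : β, cols v ∈ Submodule.span ℝ (Set.range fun j => cols (s j)) := by
    intro v
    have h1 : cols v ∈ Submodule.span ℝ (Set.range cols) := Submodule.subset_span ⟨v, rfl⟩
    rw [← hb_span] at h1
    refine Submodule.span_le.2 ?_ h1
    intro w hw
    have hmem : ch w ∈ t₀ := by
      rw [ht₀]; exact Finset.mem_image_of_mem ch (Set.mem_toFinset.2 hw)
    have htm : ch w ∈ t := ht0t hmem
    have : ∃ j, s j = ch w := by
      rw [← hsrange] at htm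
      simpa [Finset.mem_image] using htm
    obtain ⟨j, hj⟩ := this
    have : cols (s j) = w := by rw [hj]; exact hch_spec w hw
    exact this ▸ Submodule.subset_span ⟨j, rfl⟩
  have hZex : ∀ vv : {v : β // v ∉ Finset.image s Finset.univ},
      ∃ c : Fin k → ℝ, ∑ j, c j • cols (s j) = cols vv.1 := by
    intro vv
    exact (Submodule.mem_span_range_iff_exists_fun ℝ).1 (hspan vv.1)
  set Zc : {v : β // v ∉ Finset.image s Finset.univ} → Fin k → ℝ :=
    fun vv => (hZex vv).choose with hZc
  refine ⟨s, hsinj, ⟨(fun q => G q.1 (s q.2), Zc), ?_⟩⟩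
  funext x v
  simp only [chartFun]
  by_cases hv : v ∈ Finset.image s Finset.univ
  · obtain ⟨j₀, -, hj₀⟩ := Finset.mem_image.1 hv
    have hsum : (∑ j, G x (s j) * Wfun s Zc j v) = G x (s j₀) * Wfun s Zc j₀ v :=
      Finset.sum_eq_single_of_mem j₀ (Finset.mem_univ _) (fun j _ hj => by
        have hne : ¬ v = s j := fun h => hj (hsinj ((hj₀.trans h).symm))
        simp [Wfun, hv, hne])
    rw [hsum]
    simp only [Wfun, dif_pos hv]
    rw [if_pos hj₀.symm, mul_one, hj₀]
  · have hspec := congrFun (hZex ⟨v, hv⟩).choose_spec x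
    simp only [Finset.sum_apply, Pi.smul_apply, smul_eq_mul, hcols] at hspec
    rw [← hspec]
    refine Finset.sum_congr rfl fun j _ => ?_
    simp only [Wfun, dif_neg hv]
    exact mul_comm _ _

/-- standard basis vector for the `C`-part of a chart -/
def cbas (q : α × Fin k) : (α × Fin k) → ℝ := fun q' => if q' = q then 1 else 0

theorem chart_linear (s : Fin k → β) (C : (α × Fin k) → ℝ)
    (Z : {v : β // v ∉ Finset.image s Finset.univ} → Fin k → ℝ) :
    chartFun s (C, Z) = ∑ q : α × Fin k, C q • chartFun s (cbas q, Z) := by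
  funext x v
  simp only [Finset.sum_apply, Pi.smul_apply, smul_eq_mul, chartFun, Finset.mul_sum]
  rw [Finset.sum_comm]
  refine Finset.sum_congr rfl fun j _ => ?_
  have : ∀ q : α × Fin k, C q * (cbas q (x, j) * Wfun s Z j v)
      = (if q = (x, j) then C (x,j) * Wfun s Z j v else 0) := by
    intro q
    by_cases hq : q = (x, j)
    · subst hq; simp [cbas]
    · have : ¬ ((x, j) = q) := fun h => hq h.symm
      simp [cbas, this, hq]
  rw [Finset.sum_congr rfl fun q _ => this q, Finset.sum_ite_eq' Finset.univ (x, j)]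
  simp

variable (ℓ : ((α → β → ℝ)) →ₗ[ℝ] ℝ)

def hcoef (s : Fin k → β) (Z : {v : β // v ∉ Finset.image s Finset.univ} → Fin k → ℝ)
    (q : α × Fin k) : ℝ := ℓ (chartFun s (cbas q, Z))

theorem ell_chart (s : Fin k → β) (C : (α × Fin k) → ℝ)
    (Z : {v : β // v ∉ Finset.image s Finset.univ} → Fin k → ℝ) :
    ℓ (chartFun s (C, Z)) = ∑ q : α × Fin k, C q * hcoef ℓ s Z q := by
  rw [chart_linear, map_sum]
  simp only [LinearMap.map_smul, smul_eq_mul, hcoef]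

def fill (q₀ : α × Fin k) (c : {q : α × Fin k // q ≠ q₀} → ℝ) (t : ℝ) : (α × Fin k) → ℝ :=
  fun q => if h : q = q₀ then t else c ⟨q, h⟩

noncomputable def subChart (s : Fin k → β) (q₀ : α × Fin k)
    (w : ({q : α × Fin k // q ≠ q₀} → ℝ) × ({v : β // v ∉ Finset.image s Finset.univ} → Fin k → ℝ)) :
    α → β → ℝ :=
  chartFun s (fill q₀ w.1
    ((1 - ∑ q : {q : α × Fin k // q ≠ q₀}, w.1 q * hcoef ℓ s w.2 q.1) / hcoef ℓ s w.2 q₀), w.2)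

theorem subchart_cover (s : Fin k → β)
    (C : (α × Fin k) → ℝ) (Z : {v : β // v ∉ Finset.image s Finset.univ} → Fin k → ℝ)
    (hℓ : ℓ (chartFun s (C, Z)) = 1) :
    ∃ q₀ : α × Fin k, hcoef ℓ s Z q₀ ≠ 0 ∧
      ∃ w, hcoef ℓ s w.2 q₀ ≠ 0 ∧ chartFun s (C, Z) = subChart ℓ s q₀ w := by
  rw [ell_chart] at hℓ
  have hne : (∑ q : α × Fin k, C q * hcoef ℓ s Z q) ≠ 0 := by rw [hℓ]; exact one_ne_zero
  obtain ⟨q₀, -, hq₀⟩ := Finset.exists_ne_zero_of_sum_ne_zero hne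
  have hh : hcoef ℓ s Z q₀ ≠ 0 := right_ne_zero_of_mul hq₀
  refine ⟨q₀, hh, ((fun q => C q.1), Z), hh, ?_⟩
  have hsplit : (∑ q : α × Fin k, C q * hcoef ℓ s Z q)
      = C q₀ * hcoef ℓ s Z q₀ + ∑ q ∈ Finset.univ.erase q₀, C q * hcoef ℓ s Z q :=
    (Finset.add_sum_erase _ _ (Finset.mem_univ q₀)).symm
  have hsub : (∑ q : {q : α × Fin k // q ≠ q₀}, C q.1 * hcoef ℓ s Z q.1)
      = ∑ q ∈ Finset.univ.erase q₀, C q * hcoef ℓ s Z q :=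
    (Finset.sum_subtype (p := fun q : α × Fin k => q ≠ q₀) (Finset.univ.erase q₀)
      (fun q => by simp [Finset.mem_erase]) (fun q => C q * hcoef ℓ s Z q)).symm
  have hC : fill q₀ (fun q => C q.1)
      ((1 - ∑ q : {q : α × Fin k // q ≠ q₀}, C q.1 * hcoef ℓ s Z q.1) / hcoef ℓ s Z q₀) = C := by
    funext q
    by_cases hq : q = q₀
    · subst hq
      simp only [fill, dif_pos rfl, hsub, dite_true]
      rw [← hℓ, hsplit]
      field_simp
      ring
    · simp [fill, hq]
  simp only [subChart]
  rw [hC]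

end Chart

section Smooth
variable {α β : Type*} [Fintype α] [Fintype β] [DecidableEq α] [DecidableEq β] {k : ℕ}
variable (ℓ : ((α → β → ℝ)) →ₗ[ℝ] ℝ) (s : Fin k → β) (q₀ : α × Fin k)

private abbrev Om (s : Fin k → β) (q₀ : α × Fin k) :=
  ({q : α × Fin k // q ≠ q₀} → ℝ) × ({v : β // v ∉ Finset.image s Finset.univ} → Fin k → ℝ)

theorem contDiff_Wfun (j : Fin k) (v : β) :
    ContDiff ℝ 1 (fun w : Om s q₀ => Wfun s w.2 j v) := by
  by_cases h : v ∈ Finset.image s Finset.univ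
  · simp only [Wfun, dif_pos h]
    exact contDiff_const
  · simp only [Wfun, dif_neg h]
    have : (fun w : Om s q₀ => w.2 ⟨v, h⟩ j)
        = ⇑(((ContinuousLinearMap.proj j : (Fin k → ℝ) →L[ℝ] ℝ)).comp
            (((ContinuousLinearMap.proj ⟨v, h⟩ :
                ({v : β // v ∉ Finset.image s Finset.univ} → Fin k → ℝ) →L[ℝ] (Fin k → ℝ))).comp
              (ContinuousLinearMap.snd ℝ ({q : α × Fin k // q ≠ q₀} → ℝ)
                ({v : β // v ∉ Finset.image s Finset.univ} → Fin k → ℝ)))) := rfl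
    rw [this]
    exact ContinuousLinearMap.contDiff _

theorem contDiff_ell : ContDiff ℝ 1 (⇑ℓ) := by
  simpa using (LinearMap.toContinuousLinearMap ℓ).contDiff (𝕜 := ℝ) (n := 1)

theorem contDiff_hcoef (q : α × Fin k) :
    ContDiff ℝ 1 (fun w : Om s q₀ => hcoef ℓ s w.2 q) := by
  have hinner : ContDiff ℝ 1 (fun w : Om s q₀ => chartFun s (cbas q, w.2)) := by
    rw [contDiff_pi]
    intro x
    rw [contDiff_pi]
    intro v
    exact ContDiff.sum fun j _ => contDiff_const.mul (contDiff_Wfun s q₀ j v)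
  exact (contDiff_ell ℓ).comp hinner

theorem contDiffOn_subChart :
    ContDiffOn ℝ 1 (subChart ℓ s q₀) {w : Om s q₀ | hcoef ℓ s w.2 q₀ ≠ 0} := by
  set U : Set (Om s q₀) := {w | hcoef ℓ s w.2 q₀ ≠ 0} with hU
  have hnum : ContDiff ℝ 1 (fun w : Om s q₀ =>
      1 - ∑ q' : {q : α × Fin k // q ≠ q₀}, w.1 q' * hcoef ℓ s w.2 q'.1) := by
    refine contDiff_const.sub (ContDiff.sum fun q' _ => ContDiff.mul ?_ (contDiff_hcoef ℓ s q₀ q'.1))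
    have : (fun w : Om s q₀ => w.1 q')
        = ⇑((ContinuousLinearMap.proj q' : ({q : α × Fin k // q ≠ q₀} → ℝ) →L[ℝ] ℝ).comp
            (ContinuousLinearMap.fst ℝ ({q : α × Fin k // q ≠ q₀} → ℝ)
              ({v : β // v ∉ Finset.image s Finset.univ} → Fin k → ℝ))) := rfl
    rw [this]
    exact ContinuousLinearMap.contDiff _
  have hT : ContDiffOn ℝ 1 (fun w : Om s q₀ =>
      (1 - ∑ q' : {q : α × Fin k // q ≠ q₀}, w.1 q' * hcoef ℓ s w.2 q'.1) / hcoef ℓ s w.2 q₀) U :=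
    hnum.contDiffOn.div (contDiff_hcoef ℓ s q₀ q₀).contDiffOn (fun w hw => hw)
  have : ∀ x v, ContDiffOn ℝ 1 (fun w : Om s q₀ => subChart ℓ s q₀ w x v) U := by
    intro x v
    have : (fun w : Om s q₀ => subChart ℓ s q₀ w x v)
        = fun w => ∑ j, (fill q₀ w.1
            ((1 - ∑ q' : {q : α × Fin k // q ≠ q₀}, w.1 q' * hcoef ℓ s w.2 q'.1)
              / hcoef ℓ s w.2 q₀)) (x, j) * Wfun s w.2 j v := rfl
    rw [this]
    refine ContDiffOn.sum fun j _ => ContDiffOn.mul ?_ (contDiff_Wfun s q₀ j v).contDiffOn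
    by_cases hq : (x, j) = q₀
    · simp only [fill, dif_pos hq]
      exact hT
    · simp only [fill, dif_neg hq]
      have : (fun w : Om s q₀ => w.1 ⟨(x, j), hq⟩)
          = ⇑((ContinuousLinearMap.proj (⟨(x, j), hq⟩ : {q : α × Fin k // q ≠ q₀}) :
                ({q : α × Fin k // q ≠ q₀} → ℝ) →L[ℝ] ℝ).comp
              (ContinuousLinearMap.fst ℝ ({q : α × Fin k // q ≠ q₀} → ℝ)
                ({v : β // v ∉ Finset.image s Finset.univ} → Fin k → ℝ))) := rfl
      rw [this]
      exact (ContinuousLinearMap.contDiff _).contDiffOn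
  rw [contDiffOn_pi]
  intro x
  rw [contDiffOn_pi]
  intro v
  exact this x v

theorem dimH_subChart_image (hsinj : Function.Injective s) (hkb : k ≤ Fintype.card β) :
    dimH (subChart ℓ s q₀ '' {w : Om s q₀ | hcoef ℓ s w.2 q₀ ≠ 0})
      ≤ ((Fintype.card α * k - 1) + (Fintype.card β - k) * k : ℕ) := by
  set U : Set (Om s q₀) := {w | hcoef ℓ s w.2 q₀ ≠ 0} with hUdef
  have hUopen : IsOpen U := by
    have : U = (fun w : Om s q₀ => hcoef ℓ s w.2 q₀) ⁻¹' ({0}ᶜ) := by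
      ext w; simp [hUdef]
    rw [this]
    exact isOpen_compl_singleton.preimage (contDiff_hcoef ℓ s q₀ q₀).continuous
  have h1 : dimH (subChart ℓ s q₀ '' U) ≤ dimH U :=
    dimH_image_le_of_contDiffOn_isOpen fun w hw =>
      ((contDiffOn_subChart ℓ s q₀) w hw).contDiffAt (hUopen.mem_nhds hw)
  have h2 : dimH U ≤ dimH (Set.univ : Set (Om s q₀)) := dimH_mono (Set.subset_univ U)
  have hcard1 : Fintype.card {q : α × Fin k // q ≠ q₀} = Fintype.card α * k - 1 := by
    have := Fintype.card_subtype_compl (fun q : α × Fin k => q = q₀)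
    simpa [Fintype.card_subtype_eq] using this
  have hcard2 : Fintype.card {v : β // v ∉ Finset.image s Finset.univ} = Fintype.card β - k := by
    have h := Fintype.card_subtype_compl (fun v : β => v ∈ Finset.image s Finset.univ)
    have h' : Fintype.card {v : β // v ∈ Finset.image s Finset.univ} = k := by
      rw [Fintype.card_coe, Finset.card_image_of_injective _ hsinj, Finset.card_univ,
        Fintype.card_fin]
    rw [h, h']
  have hf1 : finrank ℝ ({q : α × Fin k // q ≠ q₀} → ℝ) = Fintype.card α * k - 1 := by
    rw [finrank_pi]; exact hcard1
  have hf2 : finrank ℝ ({v : β // v ∉ Finset.image s Finset.univ} → Fin k → ℝ)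
      = (Fintype.card β - k) * k := by
    calc finrank ℝ ({v : β // v ∉ Finset.image s Finset.univ} → Fin k → ℝ)
        = ∑ _ : {v : β // v ∉ Finset.image s Finset.univ}, finrank ℝ (Fin k → ℝ) :=
          finrank_pi_fintype ℝ
      _ = Fintype.card {v : β // v ∉ Finset.image s Finset.univ} * finrank ℝ (Fin k → ℝ) := by
          rw [Finset.sum_const, smul_eq_mul, Finset.card_univ]
      _ = (Fintype.card β - k) * k := by rw [hcard2, finrank_pi, Fintype.card_fin]
  have h3 : dimH (Set.univ : Set (Om s q₀))
      = ((Fintype.card α * k - 1) + (Fintype.card β - k) * k : ℕ) := by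
    rw [Real.dimH_univ_eq_finrank]
    congr 1
    rw [finrank_prod, hf1, hf2]
  calc dimH (subChart ℓ s q₀ '' U) ≤ dimH U := h1
    _ ≤ _ := h2.trans_eq h3

end Smooth

section SliceBound
variable {α β : Type*} [Fintype α] [Fintype β] [DecidableEq α] [DecidableEq β] {k : ℕ}

theorem dimH_rank_slice [Nonempty β] (ℓ : ((α → β → ℝ)) →ₗ[ℝ] ℝ) (hkb : k ≤ Fintype.card β) :
    dimH {G : α → β → ℝ | (Matrix.of G).rank ≤ k ∧ ℓ G = 1}
      ≤ ((Fintype.card α * k - 1) + (Fintype.card β - k) * k : ℕ) := by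
  classical
  have hsub : {G : α → β → ℝ | (Matrix.of G).rank ≤ k ∧ ℓ G = 1}
      ⊆ ⋃ (sq : {s : Fin k → β // Function.Injective s} × (α × Fin k)),
          subChart ℓ sq.1.1 sq.2 '' {w | hcoef ℓ sq.1.1 w.2 sq.2 ≠ 0} := by
    rintro G ⟨hrank, hℓG⟩
    obtain ⟨s, hsinj, q, hq⟩ := chart_cover hkb G hrank
    rw [hq] at hℓG
    obtain ⟨q₀, -, w, hw, heq⟩ := subchart_cover ℓ s q.1 q.2 hℓG
    refine Set.mem_iUnion.2 ⟨⟨⟨s, hsinj⟩, q₀⟩, ⟨w, hw, ?_⟩⟩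
    rw [hq, heq]
  refine (dimH_mono hsub).trans ?_
  rw [dimH_iUnion]
  exact iSup_le fun sq => dimH_subChart_image ℓ sq.1.1 sq.2 sq.1.2 hkb

end SliceBound


section Herm
variable {κ : Type*} [Fintype κ] [DecidableEq κ]

/-- A spanning family for Hermitian matrices with real coefficients. -/
def hermBasis (e : κ ≃ Fin (Fintype.card κ)) (u : κ × κ) : Matrix κ κ ℂ := fun a b =>
  if e u.1 = e u.2 then (if a = u.1 ∧ b = u.1 then 1 else 0)
  else if (e u.1 : ℕ) < e u.2 then
    ((if a = u.1 ∧ b = u.2 then 1 else 0) + (if a = u.2 ∧ b = u.1 then 1 else 0))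
  else ((if a = u.2 ∧ b = u.1 then Complex.I else 0) - (if a = u.1 ∧ b = u.2 then Complex.I else 0))

/-- Real coordinates of a Hermitian matrix in the family `hermBasis`. -/
noncomputable def hermCoord (e : κ ≃ Fin (Fintype.card κ)) (C : Matrix κ κ ℂ) (u : κ × κ) : ℝ :=
  if e u.1 = e u.2 then (C u.1 u.1).re
  else if (e u.1 : ℕ) < e u.2 then (C u.1 u.2).re else (C u.2 u.1).im

theorem hermBasis_decomp (e : κ ≃ Fin (Fintype.card κ)) {C : Matrix κ κ ℂ}
    (hC : C.IsHermitian) (a b : κ) :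
    C a b = ∑ u : κ × κ, (hermCoord e C u : ℂ) * hermBasis e u a b := by
  classical
  have hherm : ∀ x y : κ, (starRingEnd ℂ) (C x y) = C y x := fun x y => by
    have := congrFun (congrFun hC.symm y) x
    simpa [Matrix.conjTranspose_apply] using this.symm
  have hsupp : ∀ u : κ × κ, u ≠ (a, b) → u ≠ (b, a) → hermBasis e u a b = 0 := by
    rintro ⟨u1, u2⟩ h1 h2
    simp only [hermBasis]
    by_cases hd : e u1 = e u2
    · have : u1 = u2 := e.injective hd
      subst this
      rw [if_pos hd, if_neg]
      rintro ⟨rfl, rfl⟩; exact h1 rfl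
    · rw [if_neg hd]
      have e1 : ¬(a = u1 ∧ b = u2) := by rintro ⟨rfl, rfl⟩; exact h1 rfl
      have e2 : ¬(a = u2 ∧ b = u1) := by rintro ⟨rfl, rfl⟩; exact h2 rfl
      split_ifs <;> simp [e1, e2]
  by_cases hab : a = b
  · subst hab
    rw [Finset.sum_eq_single (a, a)]
    · have h1 : e (a, a).1 = e (a, a).2 := rfl
      simp only [hermCoord, hermBasis, if_pos h1, and_self, if_pos rfl, mul_one]
      have him : (C a a).im = 0 := by
        have := hherm a a
        rw [Complex.conj_eq_iff_im] at this
        exact this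
      rw [Complex.ext_iff]
      exact ⟨by simp, by simp [him]⟩
    · intro u _ hu
      rw [hsupp u hu hu, mul_zero]
    · intro h; exact absurd (Finset.mem_univ _) h
  · have hpairne : ((a, b) : κ × κ) ≠ (b, a) := fun h => hab (congrArg Prod.fst h)
    have hsum : ∑ u : κ × κ, (hermCoord e C u : ℂ) * hermBasis e u a b
        = (hermCoord e C (a, b) : ℂ) * hermBasis e (a, b) a b
          + (hermCoord e C (b, a) : ℂ) * hermBasis e (b, a) a b := by
      have hstep : ∑ u : κ × κ, (hermCoord e C u : ℂ) * hermBasis e u a b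
          = ∑ u ∈ ({(a, b), (b, a)} : Finset (κ × κ)),
              (hermCoord e C u : ℂ) * hermBasis e u a b := by
        apply (Finset.sum_subset (Finset.subset_univ _) ?_).symm
        intro u _ hu
        simp only [Finset.mem_insert, Finset.mem_singleton, not_or] at hu
        rw [hsupp u hu.1 hu.2, mul_zero]
      rw [hstep, Finset.sum_pair hpairne]
    have heab : ¬ (e a = e b) := fun h => hab (e.injective h)
    have heba : ¬ (e b = e a) := fun h => hab (e.injective h.symm)
    rcases lt_or_gt_of_ne (fun h : (e a : ℕ) = (e b : ℕ) => heab (Fin.ext h)) with hlt | hgt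
    · have h1 : hermBasis e (a, b) a b = 1 := by simp [hermBasis, heab, hlt, hab]
      have h2 : hermBasis e (b, a) a b = Complex.I := by
        simp [hermBasis, heba, lt_asymm hlt, hab]
      have h3 : hermCoord e C (a, b) = (C a b).re := by simp [hermCoord, heab, hlt]
      have h4 : hermCoord e C (b, a) = (C a b).im := by simp [hermCoord, heba, lt_asymm hlt]
      rw [hsum, h1, h2, h3, h4, mul_one]
      exact (Complex.re_add_im (C a b)).symm
    · have h1 : hermBasis e (a, b) a b = -Complex.I := by
        simp [hermBasis, heab, lt_asymm hgt, hab]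
      have h2 : hermBasis e (b, a) a b = 1 := by simp [hermBasis, heba, hgt, hab]
      have h3 : hermCoord e C (a, b) = (C b a).im := by simp [hermCoord, heab, lt_asymm hgt]
      have h4 : hermCoord e C (b, a) = (C b a).re := by simp [hermCoord, heba, hgt]
      rw [hsum, h1, h2, h3, h4, mul_one]
      have hconj : C a b = (starRingEnd ℂ) (C b a) := (hherm b a).symm
      rw [hconj, Complex.ext_iff]
      constructor <;> simp

end Herm

noncomputable instance {m : Type*} [Fintype m] : NormedSpace ℝ (Matrix m m ℂ) :=
  Matrix.normedSpace

section MainSetup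

variable {p : ℕ} (n : Fin (p + 1) → ℕ)

abbrev Jt := ∀ i : Fin p, Fin (n i.castSucc)
abbrev Pt := Fin (n (Fin.last p))
abbrev It := ∀ i : Fin (p + 1), Fin (n i)

def initF (x : It n) : Jt n := fun i => x i.castSucc

noncomputable def eJ : Jt n ≃ Fin (Fintype.card (Jt n)) := Fintype.equivFin _
noncomputable def eP : Pt n ≃ Fin (Fintype.card (Pt n)) := Fintype.equivFin _

noncomputable def Theta (G : (Jt n × Jt n) → (Pt n × Pt n) → ℝ) : Matrix (It n) (It n) ℂ :=
  fun x y => ∑ uv : (Jt n × Jt n) × (Pt n × Pt n), (G uv.1 uv.2 : ℂ) *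
    (hermBasis (eJ n) uv.1 (initF n x) (initF n y) *
     hermBasis (eP n) uv.2 (x (Fin.last p)) (y (Fin.last p)))

noncomputable def ThetaL : ((Jt n × Jt n) → (Pt n × Pt n) → ℝ) →ₗ[ℝ] Matrix (It n) (It n) ℂ where
  toFun := Theta n
  map_add' G G' := by
    funext x y
    show Theta n (G + G') x y = (Theta n G + Theta n G') x y
    simp only [Theta, Pi.add_apply, Matrix.add_apply]
    rw [← Finset.sum_add_distrib]
    refine Finset.sum_congr rfl fun uv _ => ?_
    push_cast
    ring
  map_smul' r G := by
    funext x y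
    show Theta n (r • G) x y = (r • Theta n G) x y
    simp only [Theta, Pi.smul_apply, smul_eq_mul, Matrix.smul_apply]
    rw [Complex.real_smul, Finset.mul_sum]
    refine Finset.sum_congr rfl fun uv _ => ?_
    push_cast
    ring

noncomputable def ellL : ((Jt n × Jt n) → (Pt n × Pt n) → ℝ) →ₗ[ℝ] ℝ :=
  Complex.reLm.comp ((Matrix.traceLinearMap (It n) ℝ ℂ).comp (ThetaL n))

theorem sigmaK_subset (k : ℕ) :
    SigmaK n k ⊆ (Theta n) '' {G | (Matrix.of G).rank ≤ k ∧ ellL n G = 1} := by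
  classical
  rintro A ⟨l, B, hl0, hl1, hB, hAeq⟩
  set Cm : Fin k → Matrix (Jt n) (Jt n) ℂ :=
    fun j => fun x' y' => ∏ i : Fin p, B j i.castSucc (x' i) (y' i) with hCm
  set Dm : Fin k → Matrix (Pt n) (Pt n) ℂ := fun j => B j (Fin.last p) with hDm
  have hBherm : ∀ j i, ((B j i).conjTranspose) = B j i := fun j i => (hB j i).1.1
  have hBconj : ∀ j i a b, (starRingEnd ℂ) (B j i a b) = B j i b a := by
    intro j i a b
    have := congrFun (congrFun (hBherm j i) b) a
    simpa [Matrix.conjTranspose_apply] using this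
  have hCherm : ∀ j, (Cm j).IsHermitian := by
    intro j
    funext x' y'
    show star (Cm j y' x') = Cm j x' y'
    simp only [hCm]
    rw [star_prod]
    refine Finset.prod_congr rfl fun i _ => ?_
    exact hBconj j i.castSucc (y' i) (x' i)
  have hDherm : ∀ j, (Dm j).IsHermitian := fun j => (hB j (Fin.last p)).1.isHermitian
  set γ : Fin k → (Jt n × Jt n) → ℝ := fun j => hermCoord (eJ n) (Cm j) with hγ
  set δ : Fin k → (Pt n × Pt n) → ℝ := fun j => hermCoord (eP n) (Dm j) with hδ
  set G : (Jt n × Jt n) → (Pt n × Pt n) → ℝ := fun u v => ∑ j, l j * (γ j u * δ j v) with hG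
  have hAG : (∑ j, l j • prodMat n (B j)) = Theta n G := by
    funext x y
    have hsplit : ∀ j, prodMat n (B j) x y
        = Cm j (initF n x) (initF n y) * Dm j (x (Fin.last p)) (y (Fin.last p)) := by
      intro j
      simp only [prodMat, hCm, hDm, initF]
      rw [Fin.prod_univ_castSucc]
    calc (∑ j, l j • prodMat n (B j)) x y
        = ∑ j, (l j : ℂ) *
            (Cm j (initF n x) (initF n y) * Dm j (x (Fin.last p)) (y (Fin.last p))) := by
          rw [Matrix.sum_apply]
          refine Finset.sum_congr rfl fun j _ => ?_
          have hrfl : (l j • prodMat n (B j)) x y = l j • (prodMat n (B j) x y) := rfl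
          rw [hrfl, hsplit j, Complex.real_smul]
      _ = ∑ j, (l j : ℂ) *
            ((∑ u : Jt n × Jt n, (γ j u : ℂ) * hermBasis (eJ n) u (initF n x) (initF n y)) *
             (∑ v : Pt n × Pt n, (δ j v : ℂ) *
                hermBasis (eP n) v (x (Fin.last p)) (y (Fin.last p)))) := by
          refine Finset.sum_congr rfl fun j _ => ?_
          rw [← hermBasis_decomp (eJ n) (hCherm j), ← hermBasis_decomp (eP n) (hDherm j)]
      _ = ∑ j, ∑ u : Jt n × Jt n, ∑ v : Pt n × Pt n,
            (l j : ℂ) * (((γ j u : ℂ) * hermBasis (eJ n) u (initF n x) (initF n y)) *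
              ((δ j v : ℂ) * hermBasis (eP n) v (x (Fin.last p)) (y (Fin.last p)))) := by
          refine Finset.sum_congr rfl fun j _ => ?_
          rw [Finset.sum_mul_sum, Finset.mul_sum]
          refine Finset.sum_congr rfl fun u _ => ?_
          rw [Finset.mul_sum]
      _ = Theta n G x y := by
          simp only [Theta, hG]
          rw [Fintype.sum_prod_type]
          rw [Finset.sum_comm]
          refine Finset.sum_congr rfl fun u _ => ?_
          rw [Finset.sum_comm]
          refine Finset.sum_congr rfl fun v _ => ?_
          push_cast
          rw [Finset.sum_mul]
          refine Finset.sum_congr rfl fun j _ => ?_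
          ring
  have hrank : (Matrix.of G).rank ≤ k := by
    have hfac : Matrix.of G
        = (Matrix.of fun u (j : Fin k) => l j * γ j u) * (Matrix.of fun (j : Fin k) v => δ j v) := by
      ext u v
      simp only [Matrix.mul_apply, Matrix.of_apply, hG]
      refine Finset.sum_congr rfl fun j _ => by ring
    rw [hfac]
    refine le_trans (Matrix.rank_mul_le_right _ _) ?_
    refine le_trans (Matrix.rank_le_card_height _) ?_
    simp
  have htr : Matrix.trace (∑ j, l j • prodMat n (B j)) = 1 := by
    rw [Matrix.trace_sum]
    have hterm : ∀ j, Matrix.trace (l j • prodMat n (B j)) = (l j : ℂ) := by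
      intro j
      rw [Matrix.trace_smul]
      have htrp : Matrix.trace (prodMat n (B j)) = ∏ i, Matrix.trace (B j i) := by
        simp only [Matrix.trace, Matrix.diag, prodMat]
        exact (Fintype.prod_sum (κ := fun i : Fin (p + 1) => Fin (n i))
          (f := fun i a => B j i a a)).symm
      rw [htrp]
      have h1 : ∀ i, Matrix.trace (B j i) = 1 := fun i => (hB j i).2
      simp [h1, Complex.real_smul]
    rw [Finset.sum_congr rfl fun j _ => hterm j]
    rw [← Complex.ofReal_sum, hl1, Complex.ofReal_one]
  have hell : ellL n G = 1 := by
    have : ellL n G = (Matrix.trace (Theta n G)).re := rfl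
    rw [this, ← hAG, htr, Complex.one_re]
  exact ⟨G, ⟨hrank, hell⟩, by rw [← hAG, ← hAeq]⟩

end MainSetup


/-- if `n₁ ≤ ⋯ ≤ n_p`, `n₁⋯n_{p-1} ≤ n_p` and `k < n₁²⋯n_{p-1}²`, then
`Σ^k(n₁,…,n_p)` has `(N²-1)`-dimensional Hausdorff measure zero, `N = n₁⋯n_p`. -/
theorem sigmaK_measure_zero_of_lt {p : ℕ} (n : Fin (p + 1) → ℕ) (hmono : Monotone n)
    (hlast : (∏ i : Fin p, n i.castSucc) ≤ n (Fin.last p)) (k : ℕ)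
    (hk : k < ∏ i : Fin p, (n i.castSucc) ^ 2) :
    μH[((∏ i, n i : ℕ) : ℝ) ^ 2 - 1] (SigmaK n k) = 0 := by
  classical
  rcases Nat.eq_zero_or_pos k with hk0 | hkpos
  · subst hk0
    have hempty : SigmaK n 0 = (∅ : Set _) := by
      ext A
      simp only [SigmaK, Set.mem_setOf_eq, Set.mem_empty_iff_false, iff_false, not_exists]
      intro l B
      rintro ⟨-, hsum, -⟩
      simp at hsum
    rw [hempty]
    simp
  by_cases hn0 : ∃ i, n i = 0
  · obtain ⟨i₀, hi₀⟩ := hn0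
    have hempty : SigmaK n k = (∅ : Set _) := by
      ext A
      simp only [SigmaK, Set.mem_setOf_eq, Set.mem_empty_iff_false, iff_false, not_exists]
      intro l B
      rintro ⟨-, -, hB, -⟩
      have htr := (hB ⟨0, hkpos⟩ i₀).2
      haveI : IsEmpty (Fin (n i₀)) := by rw [hi₀]; infer_instance
      rw [Matrix.trace] at htr
      simp at htr
    rw [hempty]
    simp
  push_neg at hn0
  have hnpos : ∀ i, 1 ≤ n i := fun i => Nat.one_le_iff_ne_zero.2 (hn0 i)
  set m := ∏ i : Fin p, n i.castSucc with hm
  set np := n (Fin.last p) with hnp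
  set N := ∏ i : Fin (p + 1), n i with hN
  have hm1 : 1 ≤ m := Finset.one_le_prod' fun i _ => hnpos _
  have hnp1 : 1 ≤ np := hnpos _
  have hkm : k < m ^ 2 := by rw [Finset.prod_pow] at hk; exact hk
  have hmnp : m ≤ np := hlast
  have hNm : N = m * np := by rw [hN, hm, hnp]; exact Fin.prod_univ_castSucc _
  have h0np : 0 < n (Fin.last p) := hnpos _
  haveI : Nonempty (Pt n × Pt n) := ⟨(⟨0, h0np⟩, ⟨0, h0np⟩)⟩
  have hcardJ : Fintype.card (Jt n) = m := by
    rw [hm]; simp [Fintype.card_pi]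
  have hcardP : Fintype.card (Pt n) = np := by simp [hnp]
  have hcardα : Fintype.card (Jt n × Jt n) = m ^ 2 := by
    rw [Fintype.card_prod, hcardJ, sq]
  have hcardβ : Fintype.card (Pt n × Pt n) = np ^ 2 := by
    rw [Fintype.card_prod, hcardP, sq]
  have hkβ : k ≤ Fintype.card (Pt n × Pt n) := by
    rw [hcardβ]
    exact le_of_lt (lt_of_lt_of_le hkm (Nat.pow_le_pow_left hmnp 2))
  have hdimS := dimH_rank_slice (ellL n) hkβ
  have hLip : dimH ((Theta n) '' {G | (Matrix.of G).rank ≤ k ∧ ellL n G = 1})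
      ≤ dimH {G | (Matrix.of G).rank ≤ k ∧ ellL n G = 1} := by
    have hco : Theta n = ⇑(LinearMap.toContinuousLinearMap (ThetaL n)) := by
      funext G
      simp [ThetaL]
      rfl
    rw [hco]
    exact (LinearMap.toContinuousLinearMap (ThetaL n)).lipschitz.dimH_image_le _
  have hdimT : dimH (SigmaK n k)
      ≤ ((Fintype.card (Jt n × Jt n) * k - 1) + (Fintype.card (Pt n × Pt n) - k) * k : ℕ) :=
    le_trans (dimH_mono (sigmaK_subset n k)) (le_trans hLip hdimS)
  have harith : (Fintype.card (Jt n × Jt n) * k - 1) + (Fintype.card (Pt n × Pt n) - k) * k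
      < N ^ 2 - 1 := by
    rw [hcardα, hcardβ]
    have hNsq : N ^ 2 = m ^ 2 * (np ^ 2) := by rw [hNm]; ring
    rw [hNsq]
    have hka : k < m ^ 2 := hkm
    have hab : m ^ 2 ≤ np ^ 2 := Nat.pow_le_pow_left hmnp 2
    obtain ⟨a₁, ha₁, hae⟩ : ∃ a₁, 1 ≤ a₁ ∧ m ^ 2 = k + a₁ :=
      ⟨m ^ 2 - k, by omega, by omega⟩
    obtain ⟨b₁, hb₁, hbe⟩ : ∃ b₁, 1 ≤ b₁ ∧ np ^ 2 = k + b₁ :=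
      ⟨np ^ 2 - k, by omega, by omega⟩
    rw [hae, hbe]
    have hsimp : k + b₁ - k = b₁ := by omega
    rw [hsimp]
    have hZ : (k + a₁) * (k + b₁) = (k + a₁) * k + b₁ * k + a₁ * b₁ := by ring
    have hX1 : 1 ≤ (k + a₁) * k := Nat.mul_pos (by omega) hkpos
    have hW1 : 1 ≤ a₁ * b₁ := Nat.mul_pos ha₁ hb₁
    have key : ∀ X Y W : ℕ, 1 ≤ X → 1 ≤ W → X - 1 + Y < X + Y + W - 1 := by
      intro X Y W h1 h2; omega
    calc (k + a₁) * k - 1 + b₁ * k < (k + a₁) * k + b₁ * k + a₁ * b₁ - 1 :=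
          key _ _ _ hX1 hW1
      _ = (k + a₁) * (k + b₁) - 1 := by rw [hZ]
  have hfinal : dimH (SigmaK n k) < (((N ^ 2 - 1 : ℕ) : ℝ≥0) : ℝ≥0∞) := by
    refine lt_of_le_of_lt hdimT ?_
    exact_mod_cast harith
  have hμ := hausdorffMeasure_of_dimH_lt hfinal
  have hN1 : 1 ≤ N := Finset.one_le_prod' fun i _ => hnpos _
  have hNsq1 : 1 ≤ N ^ 2 := Nat.one_le_pow _ _ (by omega)
  have hexp : ((N : ℕ) : ℝ) ^ 2 - 1 = (((N ^ 2 - 1 : ℕ) : ℝ≥0) : ℝ) := by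
    rw [NNReal.coe_natCast, Nat.cast_sub hNsq1]
    push_cast
    ring
  rw [hexp]
  exact hμ
end

section
/- For every k ≥ 1, every p ≥ 1 and particle dimensions n₁,…,n_p ≥ 1, the set Σ_pure^k(n₁,…,n_p) of separable states with pure-state ensemble length at most k is a compact and connected subset of the space of I×I complex matrices, where I = Π_{i : Fin p} Fin nᵢ. -/
open scoped ComplexOrder
open MeasureTheory

section Aux
open Matrix
variable {m : Type*} [Fintype m] [DecidableEq m]

lemma mulVec_vecMulVec (w u x : m → ℂ) :
    Matrix.vecMulVec w u *ᵥ x = (u ⬝ᵥ x) • w := by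
  ext i
  simp [Matrix.mulVec, Matrix.vecMulVec_apply, dotProduct, Finset.sum_mul,
    mul_comm, mul_left_comm, Finset.mul_sum]

lemma rank_vecMulVec_star (v : m → ℂ) (hv : v ≠ 0) :
    (Matrix.vecMulVec v (star v)).rank = 1 := by
  have hrange : LinearMap.range (Matrix.vecMulVec v (star v)).mulVecLin = Submodule.span ℂ {v} := by
    apply le_antisymm
    · rintro _ ⟨x, rfl⟩
      rw [Matrix.mulVecLin_apply, mulVec_vecMulVec]
      exact Submodule.smul_mem _ _ (Submodule.mem_span_singleton_self v)
    · rw [Submodule.span_singleton_le_iff_mem]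
      have hc : (star v) ⬝ᵥ v ≠ 0 := fun h => hv (dotProduct_star_self_eq_zero.mp h)
      refine ⟨((star v) ⬝ᵥ v)⁻¹ • v, ?_⟩
      rw [Matrix.mulVecLin_apply, mulVec_vecMulVec, dotProduct_smul, smul_eq_mul,
        inv_mul_cancel₀ hc, one_smul]
  rw [Matrix.rank, hrange, finrank_span_singleton hv]

omit [DecidableEq m] in
lemma posSemidef_vecMulVec_star (v : m → ℂ) :
    (Matrix.vecMulVec v (star v)).PosSemidef := by
  have h := Matrix.posSemidef_self_mul_conjTranspose (Matrix.replicateCol (Fin 1) v)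
  rw [Matrix.conjTranspose_replicateCol] at h; rwa [Matrix.vecMulVec_eq (Fin 1)]

lemma isPure_vecMulVec_star (v : EuclideanSpace ℂ m) (hv : ‖v‖ = 1) :
    IsPureDensityMatrix (Matrix.vecMulVec v (star (v : m → ℂ))) := by
  have hv0 : (v : m → ℂ) ≠ 0 := by
    intro h
    rw [show v = 0 from WithLp.ofLp_injective _ h] at hv
    simp at hv
  have hsum : ∑ i, ‖v i‖ ^ 2 = 1 := by
    have := EuclideanSpace.norm_eq v
    rw [hv] at this
    have h0 : 0 ≤ ∑ i, ‖v i‖ ^ 2 := Finset.sum_nonneg fun i _ => sq_nonneg _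
    nlinarith [Real.sq_sqrt h0]
  refine ⟨⟨posSemidef_vecMulVec_star v, ?_⟩, rank_vecMulVec_star v hv0⟩
  have htr : Matrix.trace (Matrix.vecMulVec (v : m → ℂ) (star (v : m → ℂ)))
      = ((∑ i, ‖v i‖ ^ 2 : ℝ) : ℂ) := by
    rw [Matrix.trace]
    push_cast
    refine Finset.sum_congr rfl fun i _ => ?_
    simp only [Matrix.diag_apply, Matrix.vecMulVec_apply, Pi.star_apply, RCLike.star_def]
    rw [Complex.mul_conj, Complex.normSq_eq_norm_sq]
    norm_cast
  rw [htr, hsum]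
  norm_num

lemma exists_unit_vec_of_pure {A : Matrix m m ℂ} (hA : IsPureDensityMatrix A) :
    ∃ v : EuclideanSpace ℂ m, ‖v‖ = 1 ∧ A = Matrix.vecMulVec v (star (v : m → ℂ)) := by
  obtain ⟨⟨hpsd, htr⟩, hrank⟩ := hA
  have hherm : A.IsHermitian := hpsd.1
  have hrank' : Fintype.card {i // hherm.eigenvalues i ≠ 0} = 1 := by
    rw [← hherm.rank_eq_card_non_zero_eigs, hrank]
  obtain ⟨⟨i₀, hi₀⟩, huniq⟩ := Fintype.card_eq_one_iff.mp hrank'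
  have hzero : ∀ i, i ≠ i₀ → hherm.eigenvalues i = 0 := by
    intro i hi
    by_contra h
    exact hi (congrArg Subtype.val (huniq ⟨i, h⟩))
  have htrace : (∑ i, (hherm.eigenvalues i : ℂ)) = 1 := by
    rw [← htr]
    conv_rhs => rw [hherm.spectral_theorem, Unitary.conjStarAlgAut_apply]
    rw [Matrix.trace_mul_cycle]
    rw [show (star (hherm.eigenvectorUnitary : Matrix m m ℂ)) * (hherm.eigenvectorUnitary : Matrix m m ℂ) = 1 from Unitary.coe_star_mul_self _]
    simp [Matrix.trace_diagonal]
  have hone : hherm.eigenvalues i₀ = 1 := by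
    have hs : (∑ i, (hherm.eigenvalues i : ℂ)) = (hherm.eigenvalues i₀ : ℂ) :=
      Finset.sum_eq_single i₀ (fun i _ hi => by rw [hzero i hi]; simp) (by simp)
    rw [hs] at htrace
    exact_mod_cast htrace
  refine ⟨hherm.eigenvectorBasis i₀, hherm.eigenvectorBasis.orthonormal.1 i₀, ?_⟩
  conv_lhs => rw [hherm.spectral_theorem, Unitary.conjStarAlgAut_apply]
  ext x y
  rw [Matrix.mul_apply]
  rw [Finset.sum_eq_single i₀ (fun b _ hb => by
      simp [Matrix.mul_diagonal, Function.comp, hzero b hb]) (by simp)]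
  simp only [Matrix.mul_diagonal, Function.comp, hone, Matrix.star_apply,
    Matrix.vecMulVec_apply, Pi.star_apply]
  rw [hherm.eigenvectorUnitary_apply, hherm.eigenvectorUnitary_apply]
  simp [RCLike.star_def]

end Aux

section Main

variable {p : ℕ} (n : Fin p → ℕ) (k : ℕ)

/-- The parametrizing map. -/
noncomputable def pureParam :
    ((Fin k → ℝ) × (Fin k → ∀ i, EuclideanSpace ℂ (Fin (n i)))) →
      Matrix (∀ i, Fin (n i)) (∀ i, Fin (n i)) ℂ :=
  fun a => ∑ j, a.1 j • prodMat n fun i =>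
    Matrix.vecMulVec (a.2 j i) (star (a.2 j i : Fin (n i) → ℂ))

/-- The parameter domain. -/
def pureDom : Set ((Fin k → ℝ) × (Fin k → ∀ i, EuclideanSpace ℂ (Fin (n i)))) :=
  (stdSimplex ℝ (Fin k)) ×ˢ
    (Set.univ.pi fun _ : Fin k => Set.univ.pi fun i =>
      Metric.sphere (0 : EuclideanSpace ℂ (Fin (n i))) 1)

lemma sigmaPureK_eq_image : SigmaPureK n k = pureParam n k '' pureDom n k := by
  ext A
  constructor
  · rintro ⟨l, B, hl0, hl1, hB, rfl⟩
    choose v hv hvB using fun j i => exists_unit_vec_of_pure (hB j i)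
    refine ⟨(l, v), ⟨⟨hl0, hl1⟩, ?_⟩, ?_⟩
    · intro j _
      intro i _
      simpa using hv j i
    · unfold pureParam
      refine Finset.sum_congr rfl fun j _ => ?_
      congr 1
      unfold prodMat
      funext x y
      refine Finset.prod_congr rfl fun i _ => ?_
      rw [hvB j i]
  · rintro ⟨⟨l, v⟩, ⟨⟨hl0, hl1⟩, hv⟩, rfl⟩
    refine ⟨l, fun j i => Matrix.vecMulVec (v j i) (star (v j i : Fin (n i) → ℂ)),
      hl0, hl1, fun j i => ?_, rfl⟩
    exact isPure_vecMulVec_star _ (by simpa using hv j (Set.mem_univ j) i (Set.mem_univ i))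

lemma pureParam_continuous : Continuous (pureParam n k) := by
  refine continuous_pi fun x => continuous_pi fun y => ?_
  simp only [pureParam, Matrix.sum_apply, Matrix.smul_apply, prodMat,
    Matrix.vecMulVec_apply, Pi.star_apply]
  refine continuous_finset_sum _ fun j _ => ?_
  refine Continuous.smul ((continuous_apply j).comp continuous_fst) ?_
  refine continuous_finset_prod _ fun i _ => ?_
  have hv : Continuous fun a : (Fin k → ℝ) × (Fin k → ∀ i, EuclideanSpace ℂ (Fin (n i))) =>
      a.2 j i := (continuous_apply i).comp ((continuous_apply j).comp continuous_snd)
  exact ((EuclideanSpace.proj (x i)).continuous.comp hv).mul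
    (((EuclideanSpace.proj (y i)).continuous.comp hv).star)

end Main

/-- for `k ≥ 1`, `p ≥ 1`, all `nᵢ ≥ 1`, the set `Σ_pure^k(n₁,…,n_p)` is a
compact and connected subset of the space of `I × I` complex matrices. -/
theorem sigmaPureK_isCompact_isConnected {p : ℕ} (hp : 1 ≤ p) (n : Fin p → ℕ)
    (hn : ∀ i, 1 ≤ n i) (k : ℕ) (hk : 1 ≤ k) :
    IsCompact (SigmaPureK n k) ∧ IsConnected (SigmaPureK n k) := by
  have hcomp : IsCompact (pureDom n k) :=
    (isCompact_stdSimplex _ _).prod (isCompact_univ_pi fun j => isCompact_univ_pi fun i =>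
      isCompact_sphere _ _)
  have hconn : IsConnected (pureDom n k) := by
    refine IsConnected.prod ?_ ?_
    · exact (convex_stdSimplex ℝ (Fin k)).isConnected
        ⟨Pi.single ⟨0, hk⟩ 1, single_mem_stdSimplex ℝ _⟩
    · refine isConnected_univ_pi.mpr fun j => isConnected_univ_pi.mpr fun i => ?_
      refine isConnected_sphere ?_ 0 zero_le_one
      have h2 : Module.finrank ℝ (EuclideanSpace ℂ (Fin (n i))) = 2 * n i := by
        rw [← Module.finrank_mul_finrank ℝ ℂ (EuclideanSpace ℂ (Fin (n i))),
          Complex.finrank_real_complex, finrank_euclideanSpace, Fintype.card_fin]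
      rw [← Module.finrank_eq_rank, h2]
      exact_mod_cast Nat.lt_of_lt_of_le Nat.one_lt_two (by have := hn i; omega)
  rw [sigmaPureK_eq_image]
  exact ⟨hcomp.image (pureParam_continuous n k),
    hconn.image _ (pureParam_continuous n k).continuousOn⟩
end

section
/- Let N = n₁⋯n_p with all nᵢ ≥ 1. If k·(1 − 2p + Σ_{i=1}^{p} 2nᵢ) < N² (as integers), then Σ_pure^k(n₁,…,n_p) has (N²−1)-dimensional Hausdorff measure zero in the space of I×I complex matrices; in particular it has measure zero in the set of separable states. -/
open scoped ComplexOrder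
open MeasureTheory

open scoped NNReal ENNReal

lemma pure_decomp {m : Type*} [Fintype m] [DecidableEq m] {B : Matrix m m ℂ}
    (h : IsPureDensityMatrix B) :
    ∃ v : m → ℂ, (∑ x, v x * (starRingEnd ℂ) (v x)) = 1 ∧
      ∀ x y, B x y = v x * (starRingEnd ℂ) (v y) := by
  obtain ⟨⟨hpsd, htr⟩, hrk⟩ := h
  have hH : B.IsHermitian := hpsd.1
  have hcard : Fintype.card {i // hH.eigenvalues i ≠ 0} = 1 := by
    rw [← hH.rank_eq_card_non_zero_eigs, hrk]
  obtain ⟨⟨i₀, hi₀⟩, huniq⟩ := Fintype.card_eq_one_iff.mp hcard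
  have hzero : ∀ i, i ≠ i₀ → hH.eigenvalues i = 0 := by
    intro i hi
    by_contra h'
    exact hi (congrArg Subtype.val (huniq ⟨i, h'⟩))
  set U : Matrix m m ℂ := (hH.eigenvectorUnitary : Matrix m m ℂ) with hU
  have hB : ∀ x y, B x y = (hH.eigenvalues i₀ : ℂ) * (U x i₀ * (starRingEnd ℂ) (U y i₀)) := by
    intro x y
    conv_lhs => rw [hH.spectral_theorem, Unitary.conjStarAlgAut_apply]
    rw [Matrix.mul_apply]
    rw [Finset.sum_eq_single i₀]
    · rw [Matrix.mul_diagonal, Matrix.star_apply]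
      simp only [Function.comp_apply, RCLike.star_def, RCLike.ofReal_alg,
        Complex.real_smul, mul_one]
      ring
    · intro b _ hb
      rw [Matrix.mul_diagonal]
      simp [hzero b hb]
    · intro hmem
      exact absurd (Finset.mem_univ i₀) hmem
  refine ⟨fun x => (Real.sqrt (hH.eigenvalues i₀) : ℂ) * U x i₀, ?_, ?_⟩
  · have : ∀ x, (fun x => (Real.sqrt (hH.eigenvalues i₀) : ℂ) * U x i₀) x *
        (starRingEnd ℂ) ((fun x => (Real.sqrt (hH.eigenvalues i₀) : ℂ) * U x i₀) x) = B x x := by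
      intro x
      rw [hB x x]
      have : (Real.sqrt (hH.eigenvalues i₀) : ℂ) * Real.sqrt (hH.eigenvalues i₀)
          = (hH.eigenvalues i₀ : ℂ) := by
        rw [← Complex.ofReal_mul, Real.mul_self_sqrt (hpsd.eigenvalues_nonneg i₀)]
      calc (↑√(hH.eigenvalues i₀) * U x i₀) *
            (starRingEnd ℂ) (↑√(hH.eigenvalues i₀) * U x i₀)
          = ((↑√(hH.eigenvalues i₀) : ℂ) * ↑√(hH.eigenvalues i₀)) *
            (U x i₀ * (starRingEnd ℂ) (U x i₀)) := by
            simp only [map_mul, Complex.conj_ofReal]; ring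
      _ = _ := by rw [this]
    calc (∑ x, _) = ∑ x, B x x := by exact Finset.sum_congr rfl fun x _ => this x
    _ = 1 := htr
  · intro x y
    rw [hB x y]
    simp only [map_mul, Complex.conj_ofReal]
    have hs : (Real.sqrt (hH.eigenvalues i₀) : ℂ) * Real.sqrt (hH.eigenvalues i₀)
        = (hH.eigenvalues i₀ : ℂ) := by
      rw [← Complex.ofReal_mul, Real.mul_self_sqrt (hpsd.eigenvalues_nonneg i₀)]
    calc (hH.eigenvalues i₀ : ℂ) * (U x i₀ * (starRingEnd ℂ) (U y i₀))
        = ((Real.sqrt (hH.eigenvalues i₀) : ℂ) * Real.sqrt (hH.eigenvalues i₀)) *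
          (U x i₀ * (starRingEnd ℂ) (U y i₀)) := by rw [hs]
    _ = _ := by ring
def chartVec {N : ℕ} (a : Fin N) (c : {b : Fin N // b ≠ a} → ℂ) : Fin N → ℂ :=
  fun b => if h : b = a then 1 else c ⟨b, h⟩

noncomputable def chartMat {N : ℕ} (a : Fin N) (c : {b : Fin N // b ≠ a} → ℂ) :
    Matrix (Fin N) (Fin N) ℂ :=
  fun x y => chartVec a c x * (starRingEnd ℂ) (chartVec a c y) *
    (∑ b, chartVec a c b * (starRingEnd ℂ) (chartVec a c b))⁻¹

lemma chart_den_eq {N : ℕ} (a : Fin N) (c : {b : Fin N // b ≠ a} → ℂ) :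
    (∑ b, chartVec a c b * (starRingEnd ℂ) (chartVec a c b))
      = ((∑ b, Complex.normSq (chartVec a c b) : ℝ) : ℂ) := by
  push_cast
  exact Finset.sum_congr rfl fun b _ => (Complex.mul_conj _)

lemma chart_den_pos {N : ℕ} (a : Fin N) (c : {b : Fin N // b ≠ a} → ℂ) :
    0 < ∑ b, Complex.normSq (chartVec a c b) := by
  have h1 : Complex.normSq (chartVec a c a) = 1 := by
    simp [chartVec]
  refine Finset.sum_pos' (fun b _ => Complex.normSq_nonneg _) ⟨a, Finset.mem_univ a, ?_⟩
  rw [h1]; norm_num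

lemma chart_den_ne {N : ℕ} (a : Fin N) (c : {b : Fin N // b ≠ a} → ℂ) :
    (∑ b, chartVec a c b * (starRingEnd ℂ) (chartVec a c b)) ≠ 0 := by
  rw [chart_den_eq]
  exact_mod_cast (chart_den_pos a c).ne'

lemma chartMat_eq {N : ℕ} (a : Fin N) (v : Fin N → ℂ)
    (hv : (∑ b, v b * (starRingEnd ℂ) (v b)) = 1) (ha : v a ≠ 0) (x y : Fin N) :
    chartMat a (fun b => v b.1 / v a) x y = v x * (starRingEnd ℂ) (v y) := by
  have ha' : (starRingEnd ℂ) (v a) ≠ 0 := by simpa using ha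
  have hvec : chartVec a (fun b => v b.1 / v a) = fun b => v b / v a := by
    funext b
    unfold chartVec
    split
    · rename_i h; subst h; exact (div_self ha).symm
    · rfl
  have hsum : (∑ b, (v b / v a) * (starRingEnd ℂ) (v b / v a))
      = (v a * (starRingEnd ℂ) (v a))⁻¹ := by
    calc (∑ b, (v b / v a) * (starRingEnd ℂ) (v b / v a))
        = ∑ b, (v b * (starRingEnd ℂ) (v b)) * (v a * (starRingEnd ℂ) (v a))⁻¹ :=
          Finset.sum_congr rfl fun b _ => by rw [map_div₀]; field_simp
      _ = (v a * (starRingEnd ℂ) (v a))⁻¹ := by rw [← Finset.sum_mul, hv, one_mul]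
  unfold chartMat
  rw [hvec, hsum, inv_inv, map_div₀]
  field_simp
abbrev ChartDom {p : ℕ} (n : Fin p → ℕ) (k' : ℕ) (a : Fin (k'+1) → ∀ i, Fin (n i)) : Type :=
  (Fin k' → ℝ) × (∀ (j : Fin (k'+1)) (i : Fin p), {b : Fin (n i) // b ≠ a j i} → ℂ)

noncomputable def chartF {p : ℕ} (n : Fin p → ℕ) (k' : ℕ) (a : Fin (k'+1) → ∀ i, Fin (n i)) :
    ChartDom n k' a → Matrix (∀ i, Fin (n i)) (∀ i, Fin (n i)) ℂ :=
  fun wc => ∑ j, ((Fin.snoc wc.1 (1 - ∑ j', wc.1 j') : Fin (k'+1) → ℝ) j) •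
    prodMat n (fun i => chartMat (a j i) (wc.2 j i))
lemma coverage {p : ℕ} (n : Fin p → ℕ) (k' : ℕ) :
    SigmaPureK n (k'+1) ⊆
      ⋃ a : Fin (k'+1) → ∀ i, Fin (n i), Set.range (chartF n k' a) := by
  rintro A ⟨l, B, hl0, hl1, hpure, rfl⟩
  have hv := fun j i => pure_decomp (hpure j i)
  choose v hv1 hv2 using hv
  have ha : ∀ j i, ∃ aji, v j i aji ≠ 0 := by
    intro j i
    by_contra h
    push_neg at h
    have h1 := hv1 j i
    rw [Finset.sum_eq_zero (fun x _ => by rw [h x]; ring)] at h1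
    exact zero_ne_one h1
  choose a ha using ha
  refine Set.mem_iUnion.mpr ⟨a,
    ⟨(l ∘ Fin.castSucc, fun j i => fun b => v j i b.1 / v j i (a j i)), ?_⟩⟩
  unfold chartF
  have hw : (Fin.snoc (l ∘ Fin.castSucc) (1 - ∑ j', (l ∘ Fin.castSucc) j') :
      Fin (k'+1) → ℝ) = l := by
    funext j
    refine Fin.lastCases ?_ (fun j' => ?_) j
    · rw [Fin.snoc_last]
      have h1 := hl1
      rw [Fin.sum_univ_castSucc] at h1
      simp only [Function.comp_apply]
      linarith
    · rw [Fin.snoc_castSucc]; rfl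
  rw [hw]
  refine Finset.sum_congr rfl fun j _ => ?_
  congr 1
  unfold prodMat
  funext x y
  refine Finset.prod_congr rfl fun i _ => ?_
  show chartMat (a j i) (fun b => v j i b.1 / v j i (a j i)) (x i) (y i) = B j i (x i) (y i)
  rw [chartMat_eq (a j i) (v j i) (hv1 j i) (ha j i), hv2 j i]

instance matrixBorelSpaceNormTop {m : Type*} [Fintype m] :
    @BorelSpace (Matrix m m ℂ)
      (@UniformSpace.toTopologicalSpace _ (@PseudoMetricSpace.toUniformSpace _
        (@MetricSpace.toPseudoMetricSpace _ (@NormedAddCommGroup.toMetricSpace _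
          Matrix.normedAddCommGroup)))) _ := ⟨rfl⟩

noncomputable instance inst_s5 {m : Type*} [Fintype m] : NormedSpace ℝ (Matrix m m ℂ) :=
  Matrix.normedSpace

section Smooth

variable {E : Type*} [NormedAddCommGroup E] [NormedSpace ℝ E]

lemma contDiff_conj' {f : E → ℂ} (hf : ContDiff ℝ 1 f) :
    ContDiff ℝ 1 (fun e => (starRingEnd ℂ) (f e)) :=
  (RCLike.conjCLE (K := ℂ)).contDiff.comp hf

lemma contDiff_chartVec {N : ℕ} (a0 : Fin N)
    {g : E → ({b : Fin N // b ≠ a0} → ℂ)} (hg : ContDiff ℝ 1 g) (b : Fin N) :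
    ContDiff ℝ 1 (fun e => chartVec a0 (g e) b) := by
  unfold chartVec
  split
  · exact contDiff_const
  · exact (contDiff_apply ℝ ℂ _).comp hg

lemma contDiff_chartMat {N : ℕ} (a0 : Fin N)
    {g : E → ({b : Fin N // b ≠ a0} → ℂ)} (hg : ContDiff ℝ 1 g) (x y : Fin N) :
    ContDiff ℝ 1 (fun e => chartMat a0 (g e) x y) := by
  unfold chartMat
  exact ((contDiff_chartVec a0 hg x).mul (contDiff_conj' (contDiff_chartVec a0 hg y))).mul
    (ContDiff.inv (ContDiff.sum fun b _ =>
      (contDiff_chartVec a0 hg b).mul (contDiff_conj' (contDiff_chartVec a0 hg b)))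
      fun e => chart_den_ne a0 (g e))

end Smooth

lemma chartF_apply {p : ℕ} (n : Fin p → ℕ) (k' : ℕ) (a : Fin (k'+1) → ∀ i, Fin (n i))
    (wc : ChartDom n k' a) (x y : ∀ i, Fin (n i)) :
    chartF n k' a wc x y = ∑ j, (((Fin.snoc wc.1 (1 - ∑ j', wc.1 j') : Fin (k'+1) → ℝ) j : ℝ) : ℂ)
      * ∏ i, chartMat (a j i) (wc.2 j i) (x i) (y i) := by
  simp [chartF, prodMat, Matrix.sum_apply, Matrix.smul_apply, Complex.real_smul]

lemma contDiff_chartF {p : ℕ} (n : Fin p → ℕ) (k' : ℕ) (a : Fin (k'+1) → ∀ i, Fin (n i)) :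
    ContDiff ℝ 1 (chartF n k' a) := by
  have hfst : ContDiff ℝ 1 (fun wc : ChartDom n k' a => wc.1) := contDiff_fst
  have hsnd : ContDiff ℝ 1 (fun wc : ChartDom n k' a => wc.2) := contDiff_snd
  have hc : ∀ j i, ContDiff ℝ 1 (fun wc : ChartDom n k' a => wc.2 j i) := by
    intro j i
    have h1 : ContDiff ℝ 1 (fun wc : ChartDom n k' a => wc.2 j) :=
      (ContinuousLinearMap.proj (R := ℝ)
        (φ := fun j => ∀ i, {b : Fin (n i) // b ≠ a j i} → ℂ) j).contDiff.comp hsnd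
    exact (ContinuousLinearMap.proj (R := ℝ)
      (φ := fun i => {b : Fin (n i) // b ≠ a j i} → ℂ) i).contDiff.comp h1
  have hsnoc : ∀ j, ContDiff ℝ 1 (fun wc : ChartDom n k' a =>
      (Fin.snoc wc.1 (1 - ∑ j', wc.1 j') : Fin (k'+1) → ℝ) j) := by
    intro j
    refine Fin.lastCases ?_ (fun j' => ?_) j
    · have h1 : (fun wc : ChartDom n k' a =>
          (Fin.snoc wc.1 (1 - ∑ j', wc.1 j') : Fin (k'+1) → ℝ) (Fin.last k'))
          = fun wc : ChartDom n k' a => 1 - ∑ j', wc.1 j' := by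
        funext wc; exact Fin.snoc_last _ _
      rw [h1]
      exact contDiff_const.sub (ContDiff.sum fun j' _ => (contDiff_apply ℝ ℝ j').comp hfst)
    · have h1 : (fun wc : ChartDom n k' a =>
          (Fin.snoc wc.1 (1 - ∑ j'', wc.1 j'') : Fin (k'+1) → ℝ) (Fin.castSucc j'))
          = fun wc : ChartDom n k' a => wc.1 j' := by
        funext wc; exact Fin.snoc_castSucc _ _ _
      rw [h1]
      exact (contDiff_apply ℝ ℝ j').comp hfst
  have key : ∀ x y : ∀ i, Fin (n i), ContDiff ℝ 1 (fun wc => chartF n k' a wc x y) := by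
    intro x y
    have heq : (fun wc => chartF n k' a wc x y) = fun wc : ChartDom n k' a =>
        ∑ j, (((Fin.snoc wc.1 (1 - ∑ j', wc.1 j') : Fin (k'+1) → ℝ) j : ℝ) : ℂ)
          * ∏ i, chartMat (a j i) (wc.2 j i) (x i) (y i) :=
      funext fun wc => chartF_apply n k' a wc x y
    rw [heq]
    refine ContDiff.sum fun j _ => ContDiff.mul ?_ ?_
    · exact Complex.ofRealCLM.contDiff.comp (hsnoc j)
    · exact contDiff_prod fun i _ => contDiff_chartMat (a j i) (hc j i) (x i) (y i)
  exact contDiff_pi.mpr fun x => contDiff_pi.mpr fun y => key x y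

lemma card_ne {N : ℕ} (a : Fin N) : Fintype.card {b : Fin N // b ≠ a} = N - 1 := by
  have := Fintype.card_subtype_compl (fun b : Fin N => b = a)
  simpa [Fintype.card_subtype_eq] using this

lemma finrank_chartDom {p : ℕ} (n : Fin p → ℕ) (k' : ℕ) (a : Fin (k'+1) → ∀ i, Fin (n i)) :
    Module.finrank ℝ (ChartDom n k' a) = k' + (k'+1) * ∑ i, 2 * (n i - 1) := by
  rw [Module.finrank_prod]
  congr 1
  · simp [Module.finrank_pi]
  · rw [Module.finrank_pi_fintype]
    have h1 : ∀ j : Fin (k'+1),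
        Module.finrank ℝ (∀ i : Fin p, {b : Fin (n i) // b ≠ a j i} → ℂ)
          = ∑ i, 2 * (n i - 1) := by
      intro j
      rw [Module.finrank_pi_fintype]
      refine Finset.sum_congr rfl fun i _ => ?_
      rw [Module.finrank_pi_fintype]
      simp [Complex.finrank_real_complex, card_ne, Finset.sum_const, mul_comm]
    simp [h1, Finset.sum_const, mul_comm]

/-- if `k·(1 - 2p + Σ 2nᵢ) < N²` (as integers), then `Σ_pure^k(n₁,…,n_p)` has
`(N²-1)`-dimensional Hausdorff measure zero, `N = n₁⋯n_p`. -/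
theorem sigmaPureK_measure_zero_of_dim_count {p : ℕ} (n : Fin p → ℕ) (hn : ∀ i, 1 ≤ n i)
    (k : ℕ)
    (hk : (k : ℤ) * (1 - 2 * (p : ℤ) + ∑ i, 2 * (n i : ℤ)) < ((∏ i, n i : ℕ) : ℤ) ^ 2) :
    μH[((∏ i, n i : ℕ) : ℝ) ^ 2 - 1] (SigmaPureK n k) = 0 := by
  set N : ℕ := ∏ i, n i with hN
  rcases k with _ | k'
  · have hemp : SigmaPureK n 0 = ∅ := by
      ext A
      simp only [SigmaPureK, Set.mem_setOf_eq, Set.mem_empty_iff_false, iff_false]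
      rintro ⟨l, B, _, hl1, _, _⟩
      simp at hl1
    rw [hemp]
    exact measure_empty
  · set S : ℕ := ∑ i, 2 * (n i - 1) with hS
    have hcast : (1 - 2 * (p : ℤ) + ∑ i, 2 * (n i : ℤ)) = 1 + (S : ℤ) := by
      have h1 : (S : ℤ) = ∑ i, (2 * (n i : ℤ) - 2) := by
        rw [hS]
        push_cast
        refine Finset.sum_congr rfl fun i _ => ?_
        have := hn i
        zify [this]
        ring
      rw [h1, Finset.sum_sub_distrib]
      simp [Finset.card_univ]
      ring
    rw [hcast] at hk
    have hnat : (k' + 1) * (1 + S) < N ^ 2 := by exact_mod_cast hk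
    rw [Nat.mul_add, Nat.mul_one] at hnat
    have hd : k' + (k' + 1) * S < N ^ 2 - 1 := by omega
    have h1N2 : 1 ≤ N ^ 2 := by omega
    have hdim : dimH (SigmaPureK n (k' + 1)) ≤ ((k' + (k' + 1) * S : ℕ) : ℝ≥0∞) := by
      refine le_trans (dimH_mono (coverage n k')) ?_
      rw [dimH_iUnion]
      refine iSup_le fun a => ?_
      refine le_trans (contDiff_chartF n k' a).dimH_range_le ?_
      rw [finrank_chartDom n k' a]
    have hlt : dimH (SigmaPureK n (k' + 1)) < (((N ^ 2 - 1 : ℕ) : ℝ≥0) : ℝ≥0∞) := by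
      refine lt_of_le_of_lt hdim ?_
      have : ((k' + (k' + 1) * S : ℕ) : ℝ≥0∞) < ((N ^ 2 - 1 : ℕ) : ℝ≥0∞) := by
        exact_mod_cast hd
      convert this using 2
      exact ENNReal.coe_natCast _
    have hzero := hausdorffMeasure_of_dimH_lt hlt
    have hexp : ((N : ℝ) ^ 2 - 1) = (((N ^ 2 - 1 : ℕ) : ℝ≥0) : ℝ) := by
      rw [NNReal.coe_natCast, Nat.cast_sub h1N2]
      push_cast
      ring
    rw [hexp]
    exact hzero
end

section
/- For a system of p ≥ 1 qubits (all nᵢ = 2): if k ≥ 2^{2p−2} = 4^{p−1}, then Σ^k(2,…,2) contains a nonempty set that is open in the subspace topology of the hyperplane of trace-one Hermitian I×I matrices, I = Fin p → Fin 2; in particular it has positive measure. -/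
open scoped ComplexOrder
open MeasureTheory

open Matrix

namespace SigmaAux
noncomputable section

def DD : Fin 4 → Matrix (Fin 2) (Fin 2) ℂ :=
  ![!![1,0;0,0], !![0,0;0,1],
    !![1/2,1/2;1/2,1/2], !![1/2, -Complex.I/2; Complex.I/2, 1/2]]

def EE : Fin 4 → Matrix (Fin 2) (Fin 2) ℂ :=
  ![!![1, (-1-Complex.I)/2; (-1+Complex.I)/2, 0],
    !![0, (-1-Complex.I)/2; (-1+Complex.I)/2, 1],
    !![0,1;1,0], !![0,Complex.I;-Complex.I,0]]

lemma duality (u v x y : Fin 2) :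
    ∑ c : Fin 4, EE c u v * DD c x y = if u = x ∧ v = y then 1 else 0 := by
  fin_cases u <;> fin_cases v <;> fin_cases x <;> fin_cases y <;>
    norm_num [DD, EE, Fin.sum_univ_four, Complex.ext_iff, Matrix.cons_val_two, Matrix.cons_val_three, Matrix.tail_cons, Matrix.head_cons]

lemma orth (c d : Fin 4) :
    ∑ u : Fin 2, ∑ v : Fin 2, EE c u v * DD d u v = if c = d then 1 else 0 := by
  fin_cases c <;> fin_cases d <;>
    norm_num [DD, EE, Fin.sum_univ_two, Complex.ext_iff, Fin.ext_iff]

lemma DD_herm (c : Fin 4) : (DD c).IsHermitian := by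
  fin_cases c <;>
    · ext i j
      fin_cases i <;> fin_cases j <;>
        simp [DD, Matrix.IsHermitian, Matrix.conjTranspose_apply, Complex.ext_iff]

lemma EE_herm (c : Fin 4) (u v : Fin 2) : (starRingEnd ℂ) (EE c u v) = EE c v u := by
  fin_cases c <;> fin_cases u <;> fin_cases v <;>
    norm_num [EE, Complex.ext_iff, map_ofNat]

lemma DD_trace (c : Fin 4) : (DD c).trace = 1 := by
  fin_cases c <;> norm_num [DD, Matrix.trace, Matrix.diag, Fin.sum_univ_two]

lemma DD_psd (c : Fin 4) : (DD c).PosSemidef := by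
  have h : DD c = (DD c)ᴴ * (DD c) := by
    fin_cases c <;>
      · ext i j
        fin_cases i <;> fin_cases j <;>
          norm_num [DD, Matrix.mul_apply, Matrix.conjTranspose_apply,
            Fin.sum_univ_two, Complex.ext_iff, map_ofNat]
  rw [h]
  exact Matrix.posSemidef_conjTranspose_mul_self _

lemma posDef_2x2 {M : Matrix (Fin 2) (Fin 2) ℂ} (hH : M.IsHermitian)
    (h00 : 0 < (M 0 0).re)
    (hdet : 0 < (M 0 0 * M 1 1 - M 0 1 * M 1 0).re) : M.PosDef := by
  have hc : ∀ i j, (starRingEnd ℂ) (M i j) = M j i := fun i j => hH.apply j i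
  set a := M 0 0 with ha
  set d := M 1 1 with hd
  set b := M 0 1 with hb
  have haim : a.im = 0 := by
    have := hc 0 0; rwa [Complex.conj_eq_iff_im] at this
  have hdim : d.im = 0 := by
    have := hc 1 1; rwa [Complex.conj_eq_iff_im] at this
  have hdtim : (a * d - b * M 1 0).im = 0 := by
    rw [← hc 0 1]
    simp [Complex.mul_im, haim, hdim, Complex.sub_im]
    ring
  refine Matrix.PosDef.of_dotProduct_mulVec_pos hH fun x hx => ?_
  have hQ : dotProduct (star x) (M *ᵥ x)
      = (starRingEnd ℂ) (x 0) * (a * x 0 + b * x 1)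
        + (starRingEnd ℂ) (x 1) * (M 1 0 * x 0 + d * x 1) := by
    simp only [dotProduct, Matrix.mulVec, Fin.sum_univ_two, Pi.star_apply, RCLike.star_def]
    rfl
  set Q := dotProduct (star x) (M *ᵥ x) with hQdef
  have key : a * Q = (starRingEnd ℂ) (a * x 0 + b * x 1) * (a * x 0 + b * x 1)
      + (a * d - b * M 1 0) * ((starRingEnd ℂ) (x 1) * x 1) := by
    rw [hQ, map_add, _root_.map_mul, _root_.map_mul, hc 0 0, hc 0 1]
    ring
  set u := a * x 0 + b * x 1 with hu
  have key2 : a * Q = (Complex.normSq u : ℂ)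
      + (a * d - b * M 1 0) * (Complex.normSq (x 1) : ℂ) := by
    rw [key, Complex.normSq_eq_conj_mul_self, Complex.normSq_eq_conj_mul_self]
  have hane : a ≠ 0 := fun h => by rw [h] at h00; simp at h00
  have haQim : (a * Q).im = 0 := by
    rw [key2]
    simp [Complex.mul_im, hdtim]
  have haQre : 0 < (a * Q).re := by
    rw [key2]
    simp only [Complex.add_re, Complex.ofReal_re, Complex.mul_re, Complex.ofReal_im,
      hdtim, zero_mul, mul_zero, sub_zero]
    by_cases h1 : x 1 = 0
    · have h0 : x 0 ≠ 0 := by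
        intro h0; apply hx; funext i; fin_cases i <;> simpa [h0, h1]
      have hune : u ≠ 0 := by
        rw [hu, h1, mul_zero, add_zero]
        exact mul_ne_zero hane h0
      have : 0 < Complex.normSq u := Complex.normSq_pos.mpr hune
      nlinarith [Complex.normSq_nonneg (x 1)]
    · have : 0 < Complex.normSq (x 1) := Complex.normSq_pos.mpr h1
      nlinarith [Complex.normSq_nonneg u]
  have hQim : Q.im = 0 := by
    have := Complex.mul_im a Q
    rw [haQim, haim] at this
    have h2 : a.re * Q.im = 0 := by linarith [this]
    rcases mul_eq_zero.mp h2 with h | h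
    · exact absurd h (ne_of_gt h00)
    · exact h
  have hQre : 0 < Q.re := by
    have h3 : (a * Q).re = a.re * Q.re := by rw [Complex.mul_re, haim, hQim]; ring
    rw [h3] at haQre
    by_contra hle
    push_neg at hle
    nlinarith
  rw [Complex.lt_def]
  exact ⟨by simpa using hQre, by simp [hQim]⟩

-- helper: product of sums over a Pi type
lemma prod_univ_sum' {ι : Type*} [Fintype ι] [DecidableEq ι] {κ : ι → Type*}
    [∀ i, Fintype (κ i)] [∀ i, DecidableEq (κ i)] (g : ∀ i, κ i → ℂ) :
    ∏ i, ∑ j, g i j = ∑ s : ∀ i, κ i, ∏ i, g i (s i) := by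
  rw [Finset.prod_univ_sum]
  rw [Fintype.piFinset_univ]

lemma sum_cons {q : ℕ} {M : Type*} [AddCommMonoid M] (F : (Fin (q+1) → Fin 4) → M) :
    ∑ s, F s = ∑ c : Fin 4, ∑ t : Fin q → Fin 4, F (Fin.cons c t) := by
  rw [← (Fin.consEquiv (fun _ => Fin 4)).sum_comp F, Fintype.sum_prod_type]
  rfl

variable {q : ℕ}

def coeff (s : Fin (q+1) → Fin 4)
    (A : Matrix (Fin (q+1) → Fin 2) (Fin (q+1) → Fin 2) ℂ) : ℂ :=
  ∑ u : Fin (q+1) → Fin 2, ∑ v : Fin (q+1) → Fin 2,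
    (∏ i, EE (s i) (u i) (v i)) * A u v

def Mmat (t : Fin q → Fin 4)
    (A : Matrix (Fin (q+1) → Fin 2) (Fin (q+1) → Fin 2) ℂ) :
    Matrix (Fin 2) (Fin 2) ℂ :=
  fun a b => ∑ c : Fin 4, coeff (Fin.cons c t) A * DD c a b

lemma recon (A : Matrix (Fin (q+1) → Fin 2) (Fin (q+1) → Fin 2) ℂ) :
    A = ∑ t : Fin q → Fin 4,
      prodMat (fun _ => 2) (Fin.cons (Mmat t A) (fun i => DD (t i))) := by
  ext x y
  rw [Matrix.sum_apply]
  have step1 : ∀ t : Fin q → Fin 4,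
      prodMat (fun _ => 2) (Fin.cons (Mmat t A) (fun i => DD (t i))) x y
        = ∑ c : Fin 4, coeff (Fin.cons c t) A *
            ∏ i : Fin (q+1), DD ((Fin.cons c t : Fin (q+1) → Fin 4) i) (x i) (y i) := by
    intro t
    rw [prodMat, Fin.prod_univ_succ]
    simp only [Fin.cons_zero, Fin.cons_succ, Mmat, Finset.sum_mul]
    refine Finset.sum_congr rfl fun c _ => ?_
    rw [Fin.prod_univ_succ]
    simp only [Fin.cons_zero, Fin.cons_succ]
    ring
  simp only [step1]
  rw [Finset.sum_comm]
  rw [← sum_cons (fun s => coeff s A * ∏ i, DD (s i) (x i) (y i))]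
  simp only [coeff, Finset.sum_mul]
  rw [Finset.sum_comm]
  have step2 : ∀ u v : Fin (q+1) → Fin 2,
      ∑ s : Fin (q+1) → Fin 4,
        (∏ i, EE (s i) (u i) (v i)) * A u v * ∏ i, DD (s i) (x i) (y i)
      = A u v * (if u = x ∧ v = y then 1 else 0) := by
    intro u v
    have e1 : ∀ s : Fin (q+1) → Fin 4,
        (∏ i, EE (s i) (u i) (v i)) * A u v * ∏ i, DD (s i) (x i) (y i)
        = A u v * ∏ i, (EE (s i) (u i) (v i) * DD (s i) (x i) (y i)) := by
      intro s; rw [Finset.prod_mul_distrib]; ring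
    simp only [e1]
    rw [← Finset.mul_sum, ← prod_univ_sum' (fun i c => EE c (u i) (v i) * DD c (x i) (y i))]
    congr 1
    calc ∏ i, ∑ c : Fin 4, EE c (u i) (v i) * DD c (x i) (y i)
        = ∏ i : Fin (q+1), (if u i = x i ∧ v i = y i then (1:ℂ) else 0) :=
          Finset.prod_congr rfl fun i _ => duality _ _ _ _
      _ = if (∀ i, u i = x i ∧ v i = y i) then 1 else 0 := by
          rw [Finset.prod_boole]; simp
      _ = if u = x ∧ v = y then 1 else 0 := by
          congr 1
          simp only [eq_iff_iff]
          constructor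
          · intro h; exact ⟨funext fun i => (h i).1, funext fun i => (h i).2⟩
          · rintro ⟨rfl, rfl⟩ i; exact ⟨rfl, rfl⟩
  have swap : ∀ u : Fin (q+1) → Fin 2,
      ∑ s : Fin (q+1) → Fin 4, ∑ v : Fin (q+1) → Fin 2,
        (∏ i, EE (s i) (u i) (v i)) * A u v * ∏ i, DD (s i) (x i) (y i)
      = ∑ v : Fin (q+1) → Fin 2, A u v * (if u = x ∧ v = y then 1 else 0) := by
    intro u
    rw [Finset.sum_comm]
    exact Finset.sum_congr rfl fun v _ => step2 u v
  simp only [swap]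
  simp [ite_and, mul_ite, mul_one, mul_zero, Finset.sum_ite_eq', Finset.mem_univ]

lemma trace_prodMat {p : ℕ} (B : ∀ _ : Fin p, Matrix (Fin 2) (Fin 2) ℂ) :
    (prodMat (fun _ => 2) B).trace = ∏ i, (B i).trace := by
  simp only [Matrix.trace, Matrix.diag, prodMat]
  rw [prod_univ_sum' (fun i a => B i a a)]

lemma prodMat_herm {p : ℕ} (B : ∀ _ : Fin p, Matrix (Fin 2) (Fin 2) ℂ)
    (hB : ∀ i, (B i).IsHermitian) : (prodMat (fun _ => 2) B).IsHermitian := by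
  ext x y
  simp only [Matrix.conjTranspose_apply, prodMat, star_prod]
  exact Finset.prod_congr rfl fun i _ => (hB i).apply _ _

lemma coeff_add (s : Fin (q+1) → Fin 4) (A B) :
    coeff s (A + B) = coeff s A + coeff s B := by
  simp only [coeff, Matrix.add_apply, mul_add, Finset.sum_add_distrib]

lemma coeff_sum {ι : Type*} (s : Fin (q+1) → Fin 4) (f : ι → Matrix (Fin (q+1) → Fin 2) (Fin (q+1) → Fin 2) ℂ)
    (fs : Finset ι) : coeff s (∑ j ∈ fs, f j) = ∑ j ∈ fs, coeff s (f j) := by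
  classical
  induction fs using Finset.induction with
  | empty => simp [coeff]
  | insert _ _ hni ih => rw [Finset.sum_insert hni, coeff_add, ih, Finset.sum_insert hni]

lemma coeff_smul (s : Fin (q+1) → Fin 4) (r : ℝ) (A) :
    coeff s (r • A) = r * coeff s A := by
  simp only [coeff, Matrix.smul_apply, Finset.mul_sum]
  refine Finset.sum_congr rfl fun u _ => Finset.sum_congr rfl fun v _ => ?_
  rw [Complex.real_smul]
  ring

lemma coeff_conj (s : Fin (q+1) → Fin 4) (A : Matrix (Fin (q+1) → Fin 2) (Fin (q+1) → Fin 2) ℂ)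
    (hA : A.IsHermitian) : (starRingEnd ℂ) (coeff s A) = coeff s A := by
  simp only [coeff, map_sum, _root_.map_mul, map_prod]
  rw [Finset.sum_comm]
  refine Finset.sum_congr rfl fun u _ => Finset.sum_congr rfl fun v _ => ?_
  congr 1
  · exact Finset.prod_congr rfl fun i _ => EE_herm _ _ _
  · exact hA.apply _ _

lemma Mmat_herm (t : Fin q → Fin 4) (A : Matrix (Fin (q+1) → Fin 2) (Fin (q+1) → Fin 2) ℂ)
    (hA : A.IsHermitian) : (Mmat t A).IsHermitian := by
  ext a b
  simp only [Matrix.conjTranspose_apply, Mmat, star_sum, star_mul']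
  refine Finset.sum_congr rfl fun c _ => ?_
  rw [show star (coeff (Fin.cons c t) A) = coeff (Fin.cons c t) A from coeff_conj _ _ hA,
    show star (DD c b a) = DD c a b from (DD_herm c).apply _ _]

lemma coeff_prodMat (s : Fin (q+1) → Fin 4) (B : ∀ _ : Fin (q+1), Matrix (Fin 2) (Fin 2) ℂ) :
    coeff s (prodMat (fun _ => 2) B) = ∏ i, ∑ a : Fin 2, ∑ b : Fin 2, EE (s i) a b * B i a b := by
  simp only [coeff, prodMat]
  have e1 : ∀ u v : Fin (q+1) → Fin 2,
      (∏ i, EE (s i) (u i) (v i)) * ∏ i, B i (u i) (v i)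
      = ∏ i, (EE (s i) (u i) (v i) * B i (u i) (v i)) := by
    intro u v; rw [Finset.prod_mul_distrib]
  simp only [e1]
  have e2 : ∀ u : Fin (q+1) → Fin 2,
      ∑ v : Fin (q+1) → Fin 2, ∏ i, (EE (s i) (u i) (v i) * B i (u i) (v i))
      = ∏ i, ∑ b : Fin 2, EE (s i) (u i) b * B i (u i) b := by
    intro u
    rw [← prod_univ_sum' (fun i b => EE (s i) (u i) b * B i (u i) b)]
  simp only [e2]
  rw [← prod_univ_sum' (fun i a => ∑ b : Fin 2, EE (s i) a b * B i a b)]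

def halfI : Matrix (Fin 2) (Fin 2) ℂ := !![1/2, 0; 0, 1/2]

lemma halfI_herm : halfI.IsHermitian := by
  ext a b
  fin_cases a <;> fin_cases b <;>
    norm_num [halfI, Matrix.conjTranspose_apply, Complex.ext_iff]

lemma halfI_trace : halfI.trace = 1 := by
  norm_num [halfI, Matrix.trace, Matrix.diag, Fin.sum_univ_two]

lemma halfI_density : IsDensityMatrix halfI := by
  constructor
  · have : halfI = Matrix.diagonal ![1/2, 1/2] := by
      ext a b; fin_cases a <;> fin_cases b <;> simp [halfI, Matrix.diagonal]
    rw [this]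
    refine Matrix.PosSemidef.diagonal fun i => ?_
    fin_cases i <;>
      simp [Complex.le_def]
  · exact halfI_trace

lemma phi_halfI (c : Fin 4) :
    ∑ a : Fin 2, ∑ b : Fin 2, EE c a b * halfI a b = ![(1:ℂ)/2, 1/2, 0, 0] c := by
  fin_cases c <;> norm_num [EE, halfI, Fin.sum_univ_two]

def Astar (q : ℕ) : Matrix (Fin (q+1) → Fin 2) (Fin (q+1) → Fin 2) ℂ :=
  ∑ t : Fin q → Fin 4,
    (((4:ℝ)^q)⁻¹) • prodMat (fun _ => 2) (Fin.cons halfI (fun i => DD (t i)))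

lemma coeff_Astar (c : Fin 4) (t : Fin q → Fin 4) :
    coeff (Fin.cons c t) (Astar q)
      = (((4:ℝ)^q)⁻¹ : ℝ) * ![(1:ℂ)/2, 1/2, 0, 0] c := by
  rw [Astar, coeff_sum]
  have e1 : ∀ t' : Fin q → Fin 4,
      coeff (Fin.cons c t)
          ((((4:ℝ)^q)⁻¹) • prodMat (fun _ => 2) (Fin.cons halfI (fun i => DD (t' i))))
      = ((4:ℝ)^q)⁻¹ * (![(1:ℂ)/2,1/2,0,0] c * (if t' = t then 1 else 0)) := by
    intro t'
    rw [coeff_smul, coeff_prodMat]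
    congr 1
    rw [Fin.prod_univ_succ]
    simp only [Fin.cons_zero, Fin.cons_succ]
    rw [phi_halfI]
    congr 1
    calc ∏ i : Fin q, ∑ a : Fin 2, ∑ b : Fin 2, EE (t i) a b * DD (t' i) a b
        = ∏ i : Fin q, (if t i = t' i then (1:ℂ) else 0) :=
          Finset.prod_congr rfl fun i _ => orth _ _
      _ = if t' = t then 1 else 0 := by
          rw [Finset.prod_boole]
          congr 1
          simp only [eq_iff_iff, funext_iff, Finset.mem_univ, true_implies]
          exact ⟨fun h i => (h i).symm, fun h i => (h i).symm⟩
  simp only [e1]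
  simp [mul_ite, mul_one, mul_zero, Finset.sum_ite_eq', Finset.mem_univ]

lemma Mmat_Astar (t : Fin q → Fin 4) :
    Mmat t (Astar q) = (((4:ℝ)^q)⁻¹ : ℝ) • halfI := by
  ext a b
  simp only [Mmat, coeff_Astar, Matrix.smul_apply, Fin.sum_univ_four]
  fin_cases a <;> fin_cases b <;>
    · norm_num [DD, halfI, Complex.real_smul, Matrix.cons_val_two, Matrix.cons_val_three, Matrix.tail_cons, Matrix.head_cons]
      try ring

lemma Astar_herm : (Astar q).IsHermitian := by
  unfold Matrix.IsHermitian
  rw [Astar, Matrix.conjTranspose_sum]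
  refine Finset.sum_congr rfl fun t _ => ?_
  rw [Matrix.conjTranspose_smul]
  rw [show star (((4:ℝ)^q)⁻¹) = ((4:ℝ)^q)⁻¹ from rfl]
  congr 1
  exact prodMat_herm _ (fun i => by
    refine Fin.cases ?_ ?_ i
    · exact halfI_herm
    · intro j; exact DD_herm (t j))

lemma Astar_trace : (Astar q).trace = 1 := by
  rw [Astar, Matrix.trace_sum]
  have e1 : ∀ t : Fin q → Fin 4,
      ((((4:ℝ)^q)⁻¹) • prodMat (fun _ => 2) (Fin.cons halfI (fun i => DD (t i)))).trace
      = (((4:ℝ)^q)⁻¹ : ℝ) := by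
    intro t
    rw [Matrix.trace_smul, trace_prodMat, Fin.prod_univ_succ]
    simp only [Fin.cons_zero, Fin.cons_succ, halfI_trace, DD_trace]
    simp
  simp only [e1]
  rw [Finset.sum_const, Finset.card_univ, Fintype.card_fun]
  push_cast
  simp

lemma prodMat_cons_smul (r : ℝ) (M : Matrix (Fin 2) (Fin 2) ℂ)
    (T : Fin q → Matrix (Fin 2) (Fin 2) ℂ) :
    prodMat (fun _ => 2) (Fin.cons (r • M) T)
      = r • prodMat (fun _ => 2) (Fin.cons M T) := by
  ext x y
  simp only [prodMat, Matrix.smul_apply, Fin.prod_univ_succ, Fin.cons_zero, Fin.cons_succ]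
  rw [smul_mul_assoc]

lemma psd_smul {M : Matrix (Fin 2) (Fin 2) ℂ} (h : M.PosSemidef) {r : ℝ} (hr : 0 ≤ r) :
    (r • M).PosSemidef := by
  refine Matrix.PosSemidef.of_dotProduct_mulVec_nonneg ?_ ?_
  · unfold Matrix.IsHermitian
    rw [Matrix.conjTranspose_smul, h.1]
    norm_num
  · intro x
    rw [Matrix.smul_mulVec, dotProduct_smul]
    have h2 := h.dotProduct_mulVec_nonneg x
    rw [show r • (dotProduct (star x) (M *ᵥ x)) = (r : ℂ) * dotProduct (star x) (M *ᵥ x) from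
      Complex.real_smul]
    exact mul_nonneg (by exact_mod_cast Complex.zero_le_real.mpr hr) h2

lemma trace_re_eq {M : Matrix (Fin 2) (Fin 2) ℂ} (h : M.IsHermitian) :
    ((M.trace.re : ℝ) : ℂ) = M.trace := by
  rw [← Complex.conj_eq_iff_re]
  rw [Matrix.trace_fin_two, map_add,
    show (starRingEnd ℂ) (M 0 0) = M 0 0 from h.apply 0 0,
    show (starRingEnd ℂ) (M 1 1) = M 1 1 from h.apply 1 1]

lemma sum_extend {α β M : Type*} [Fintype α] [Fintype β] [DecidableEq β] [AddCommMonoid M]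
    {e : α → β} (he : Function.Injective e) (f : α → M) :
    ∑ j, Function.extend e f 0 j = ∑ t, f t := by
  classical
  have h0 : ∑ j ∈ Finset.univ.image e, Function.extend e f 0 j
      = ∑ j, Function.extend e f 0 j :=
    Finset.sum_subset (Finset.subset_univ _) (fun j _ hj =>
      Function.extend_apply' _ _ _ (by
        intro ⟨t, ht⟩
        exact hj (Finset.mem_image.mpr ⟨t, Finset.mem_univ t, ht⟩)))
  rw [← h0, Finset.sum_image (fun a _ b _ hab => he hab)]
  exact Finset.sum_congr rfl fun t _ => he.extend_apply f 0 t

lemma mem_sigmaK {k : ℕ} (hk4 : 4 ^ q ≤ k)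
    (A : Matrix (Fin (q+1) → Fin 2) (Fin (q+1) → Fin 2) ℂ)
    (hA : A.IsHermitian) (htr : A.trace = 1)
    (h1 : ∀ t : Fin q → Fin 4, 0 < (Mmat t A 0 0).re)
    (h2 : ∀ t : Fin q → Fin 4, 0 < (Mmat t A 1 1).re)
    (h3 : ∀ t : Fin q → Fin 4,
      0 < (Mmat t A 0 0 * Mmat t A 1 1 - Mmat t A 0 1 * Mmat t A 1 0).re) :
    A ∈ SigmaK (fun _ : Fin (q+1) => 2) k := by
  classical
  have hcard : Fintype.card (Fin q → Fin 4) = 4 ^ q := by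
    simp [Fintype.card_fun]
  let e0 := Fintype.equivFinOfCardEq hcard
  let e : (Fin q → Fin 4) → Fin k := fun t => Fin.castLE hk4 (e0 t)
  have he : Function.Injective e :=
    (Fin.castLE_injective hk4).comp e0.injective
  have hposdef : ∀ t, (Mmat t A).PosDef :=
    fun t => posDef_2x2 (Mmat_herm t A hA) (h1 t) (h3 t)
  set lam : (Fin q → Fin 4) → ℝ := fun t => ((Mmat t A).trace).re with hlam
  have hlam_pos : ∀ t, 0 < lam t := by
    intro t
    have := h1 t; have := h2 t
    simp only [hlam, Matrix.trace_fin_two, Complex.add_re]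
    linarith
  set Bfun : (Fin q → Fin 4) → (Fin (q+1) → Matrix (Fin 2) (Fin 2) ℂ) :=
    fun t => Fin.cons ((lam t)⁻¹ • Mmat t A) (fun i => DD (t i)) with hBfun
  have hBdens : ∀ t i, IsDensityMatrix (Bfun t i) := by
    intro t i
    refine Fin.cases ?_ ?_ i
    · constructor
      · exact psd_smul (hposdef t).posSemidef (inv_nonneg.mpr (hlam_pos t).le)
      · rw [hBfun]
        simp only [Fin.cons_zero]
        rw [Matrix.trace_smul, ← trace_re_eq (Mmat_herm t A hA), Complex.real_smul,
          ← Complex.ofReal_mul]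
        norm_cast
        exact inv_mul_cancel₀ (ne_of_gt (hlam_pos t))
    · intro j
      rw [hBfun]
      simp only [Fin.cons_succ]
      exact ⟨DD_psd (t j), DD_trace (t j)⟩
  have hsum_lam : ∑ t, lam t = 1 := by
    have hre : ∑ t, ((Mmat t A).trace) = 1 := by
      conv_lhs => rw [show (fun t => (Mmat t A).trace) = fun t =>
        (prodMat (fun _ => 2) (Fin.cons (Mmat t A) (fun i => DD (t i)))).trace from
          funext fun t => by
            rw [trace_prodMat, Fin.prod_univ_succ]
            simp only [Fin.cons_zero, Fin.cons_succ, DD_trace]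
            simp]
      rw [← Matrix.trace_sum, ← recon A, htr]
    have := congrArg Complex.re hre
    simpa [Complex.re_sum] using this
  refine ⟨Function.extend e lam 0, Function.extend e Bfun (fun _ _ => halfI), ?_, ?_, ?_, ?_⟩
  · intro j
    by_cases hj : ∃ t, e t = j
    · obtain ⟨t, rfl⟩ := hj
      rw [he.extend_apply]
      exact (hlam_pos t).le
    · rw [Function.extend_apply' _ _ _ hj]
      norm_num
  · rw [sum_extend he]
    exact hsum_lam
  · intro j i
    by_cases hj : ∃ t, e t = j
    · obtain ⟨t, rfl⟩ := hj
      rw [he.extend_apply]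
      exact hBdens t i
    · rw [Function.extend_apply' _ _ _ hj]
      exact ⟨halfI_density.1, halfI_density.2⟩
  · have hpt : (fun j => Function.extend e lam 0 j •
        prodMat (fun _ => 2) (Function.extend e Bfun (fun _ _ => halfI) j))
        = Function.extend e
            (fun t => lam t • prodMat (fun _ => 2) (Bfun t)) 0 := by
      funext j
      by_cases hj : ∃ t, e t = j
      · obtain ⟨t, rfl⟩ := hj
        rw [he.extend_apply, he.extend_apply, he.extend_apply]
      · rw [Function.extend_apply' _ _ _ hj, Function.extend_apply' _ _ _ hj,
          Function.extend_apply' _ _ _ hj]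
        simp
    rw [hpt, sum_extend he]
    have hterm : ∀ t, lam t • prodMat (fun _ => 2) (Bfun t)
        = prodMat (fun _ => 2) (Fin.cons (Mmat t A) (fun i => DD (t i))) := by
      intro t
      rw [hBfun, ← prodMat_cons_smul, smul_smul,
        mul_inv_cancel₀ (ne_of_gt (hlam_pos t)), one_smul]
    simp only [hterm]
    exact recon A

lemma continuous_Mmat_entry (t : Fin q → Fin 4) (a b : Fin 2) :
    Continuous fun A : Matrix (Fin (q+1) → Fin 2) (Fin (q+1) → Fin 2) ℂ =>
      Mmat t A a b := by
  simp only [Mmat, coeff]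
  refine continuous_finset_sum _ fun c _ => Continuous.mul ?_ continuous_const
  refine continuous_finset_sum _ fun u _ => ?_
  refine continuous_finset_sum _ fun v _ => ?_
  exact continuous_const.mul ((continuous_apply v).comp (continuous_apply u))

lemma Mmat_Astar_conds (t : Fin q → Fin 4) :
    0 < (Mmat t (Astar q) 0 0).re ∧ 0 < (Mmat t (Astar q) 1 1).re ∧
      0 < (Mmat t (Astar q) 0 0 * Mmat t (Astar q) 1 1
        - Mmat t (Astar q) 0 1 * Mmat t (Astar q) 1 0).re := by
  have h4 : (0:ℝ) < ((4:ℝ)^q)⁻¹ := by positivity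
  set r := ((4:ℝ)^q)⁻¹ with hr
  have h00 : Mmat t (Astar q) 0 0 = ((r/2 : ℝ) : ℂ) := by
    rw [Mmat_Astar]
    simp [halfI, Complex.real_smul]
    rw [hr]
    push_cast
    ring
  have h11 : Mmat t (Astar q) 1 1 = ((r/2 : ℝ) : ℂ) := by
    rw [Mmat_Astar]
    simp [halfI, Complex.real_smul]
    rw [hr]
    push_cast
    ring
  have h01 : Mmat t (Astar q) 0 1 = 0 := by
    rw [Mmat_Astar]; simp [halfI]
  have h10 : Mmat t (Astar q) 1 0 = 0 := by
    rw [Mmat_Astar]; simp [halfI]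
  rw [h00, h11, h01, h10]
  have hr2 : (0:ℝ) < r / 2 := by linarith
  refine ⟨by simpa using hr2, by simpa using hr2, ?_⟩
  have : ((r/2 : ℝ) : ℂ) * ((r/2 : ℝ) : ℂ) - 0 * 0 = ((r/2 * (r/2) : ℝ) : ℂ) := by
    push_cast; ring
  rw [this, Complex.ofReal_re]
  nlinarith

end
end SigmaAux

open SigmaAux in
/-- for `p ≥ 1` qubits, if `k ≥ 2^(2p-2)` then `Σ^k(2,…,2)` contains a nonempty
set open in the subspace topology of the trace-one Hermitian hyperplane. -/
theorem sigmaK_qubits_contains_open (p : ℕ) (hp : 1 ≤ p) (k : ℕ)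
    (hk : 2 ^ (2 * p - 2) ≤ k) :
    ∃ U : Set {A : Matrix (Fin p → Fin 2) (Fin p → Fin 2) ℂ //
        A.IsHermitian ∧ A.trace = 1},
      U.Nonempty ∧ IsOpen U ∧ Subtype.val '' U ⊆ SigmaK (fun _ : Fin p => 2) k := by
  obtain ⟨q, rfl⟩ : ∃ q, p = q + 1 := by
    cases p with
    | zero => omega
    | succ q => exact ⟨q, rfl⟩
  have hk4 : 4 ^ q ≤ k := by
    have h1 : 2 * (q+1) - 2 = 2 * q := by omega
    rw [h1, pow_mul] at hk
    norm_num at hk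
    exact hk
  classical
  refine ⟨{A | ∀ t : Fin q → Fin 4,
      0 < (Mmat t A.1 0 0).re ∧ 0 < (Mmat t A.1 1 1).re ∧
      0 < (Mmat t A.1 0 0 * Mmat t A.1 1 1 - Mmat t A.1 0 1 * Mmat t A.1 1 0).re},
    ⟨⟨Astar q, Astar_herm, Astar_trace⟩, fun t => Mmat_Astar_conds t⟩, ?_, ?_⟩
  · have heq : {A : {A : Matrix (Fin (q+1) → Fin 2) (Fin (q+1) → Fin 2) ℂ //
        A.IsHermitian ∧ A.trace = 1} | ∀ t : Fin q → Fin 4,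
        0 < (Mmat t A.1 0 0).re ∧ 0 < (Mmat t A.1 1 1).re ∧
        0 < (Mmat t A.1 0 0 * Mmat t A.1 1 1 - Mmat t A.1 0 1 * Mmat t A.1 1 0).re}
      = ⋂ t : Fin q → Fin 4,
          ((fun A => (Mmat t A.1 0 0).re) ⁻¹' Set.Ioi 0
            ∩ (fun A => (Mmat t A.1 1 1).re) ⁻¹' Set.Ioi 0
            ∩ (fun A => (Mmat t A.1 0 0 * Mmat t A.1 1 1
                - Mmat t A.1 0 1 * Mmat t A.1 1 0).re) ⁻¹' Set.Ioi 0) := by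
      ext A
      simp only [Set.mem_setOf_eq, Set.mem_iInter, Set.mem_inter_iff, Set.mem_preimage,
        Set.mem_Ioi]
      constructor
      · intro h t; exact ⟨⟨(h t).1, (h t).2.1⟩, (h t).2.2⟩
      · intro h t; exact ⟨(h t).1.1, (h t).1.2, (h t).2⟩
    rw [heq]
    refine isOpen_iInter_of_finite fun t => ?_
    have c1 : ∀ a b : Fin 2, Continuous fun A : {A : Matrix (Fin (q+1) → Fin 2)
        (Fin (q+1) → Fin 2) ℂ // A.IsHermitian ∧ A.trace = 1} => Mmat t A.1 a b :=
      fun a b => (continuous_Mmat_entry t a b).comp continuous_subtype_val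
    refine IsOpen.inter (IsOpen.inter ?_ ?_) ?_
    · exact (Complex.continuous_re.comp (c1 0 0)).isOpen_preimage _ isOpen_Ioi
    · exact (Complex.continuous_re.comp (c1 1 1)).isOpen_preimage _ isOpen_Ioi
    · exact (Complex.continuous_re.comp
        (Continuous.sub ((c1 0 0).mul (c1 1 1)) ((c1 0 1).mul (c1 1 0)))).isOpen_preimage
          _ isOpen_Ioi
  · rintro A ⟨⟨A', hA'⟩, hU, rfl⟩
    exact mem_sigmaK hk4 A' hA'.1 hA'.2 (fun t => (hU t).1) (fun t => (hU t).2.1)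
      (fun t => (hU t).2.2)
end
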